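/- arXiv:math/0702186 — 4 statements merged into one kernel-verified Lean document; each statement's English description precedes it below -/
import Mathlib

section
/- Let q_k, r_k (k = 1,…,d) be nonnegative reals. For any d×d positive semidefinite matrices Q, R with diagonals Q_{kk} = q_k and R_{kk} = r_k, the operator norm satisfies ‖Q + R‖ ≤ ‖Q̂ + R̂‖, where Q̂_{jk} = √(q_j q_k) and R̂_{jk} = √(r_j r_k) are the entrywise rank-one matrices. -/
open Matrix
open scoped ComplexOrder InnerProductSpace

/-- Polarization bound: a symmetric operator whose numerical radius is at most `C`
has norm at most `C`. -/
lemma stmt3_aux_norm_le {E : Type*} [NormedAddCommGroup E] [InnerProductSpace ℂ E]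
    (T : E →L[ℂ] E) (hsymm : ∀ x y : E, ⟪T x, y⟫_ℂ = ⟪x, T y⟫_ℂ) {C : ℝ} (hC : 0 ≤ C)
    (h : ∀ x : E, |(⟪T x, x⟫_ℂ).re| ≤ C * ‖x‖ ^ 2) : ‖T‖ ≤ C := by
  refine T.opNorm_le_bound hC fun x => ?_
  by_cases hTx : T x = 0
  · rw [hTx, norm_zero]
    positivity
  have hx : x ≠ 0 := by rintro rfl; simp at hTx
  have hxn : 0 < ‖x‖ := norm_pos_iff.2 hx
  have hTxn : 0 < ‖T x‖ := norm_pos_iff.2 hTx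
  set c : ℝ := ‖x‖ / ‖T x‖ with hc
  have hcpos : 0 < c := div_pos hxn hTxn
  set y : E := (c : ℂ) • T x with hy
  have hyn : ‖y‖ = ‖x‖ := by
    rw [hy, norm_smul]
    simp only [Complex.norm_real, Real.norm_eq_abs, abs_of_pos hcpos, hc]
    rw [abs_of_pos (div_pos hxn hTxn)]; field_simp
  have hTxy : (⟪T x, y⟫_ℂ).re = c * ‖T x‖ ^ 2 := by
    rw [hy, inner_smul_right]
    have h5 : ⟪T x, T x⟫_ℂ = ((‖T x‖ ^ 2 : ℝ) : ℂ) := by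
      rw [inner_self_eq_norm_sq_to_K]; norm_cast
    rw [h5, ← Complex.ofReal_mul, Complex.ofReal_re]
  have hTyx : (⟪T y, x⟫_ℂ).re = c * ‖T x‖ ^ 2 := by
    rw [hsymm y x, ← inner_conj_symm, Complex.conj_re, hTxy]
  have e1 : ⟪T (x + y), x + y⟫_ℂ
      = ⟪T x, x⟫_ℂ + ⟪T x, y⟫_ℂ + ⟪T y, x⟫_ℂ + ⟪T y, y⟫_ℂ := by
    rw [map_add]
    simp only [inner_add_left, inner_add_right]
    ring
  have e2 : ⟪T (x - y), x - y⟫_ℂ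
      = ⟪T x, x⟫_ℂ - ⟪T x, y⟫_ℂ - ⟪T y, x⟫_ℂ + ⟪T y, y⟫_ℂ := by
    rw [map_sub]
    simp only [inner_sub_left, inner_sub_right]
    ring
  have key : (⟪T (x + y), x + y⟫_ℂ).re - (⟪T (x - y), x - y⟫_ℂ).re
      = 4 * (c * ‖T x‖ ^ 2) := by
    rw [e1, e2]
    simp only [Complex.add_re, Complex.sub_re]
    rw [hTxy, hTyx]
    ring
  have h1 := h (x + y)
  have h2 := h (x - y)
  have hpar : ‖x + y‖ ^ 2 + ‖x - y‖ ^ 2 = 2 * (‖x‖ ^ 2 + ‖y‖ ^ 2) := by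
    have := parallelogram_law_with_norm ℂ x y
    exact this
  have hb : 4 * (c * ‖T x‖ ^ 2) ≤ 4 * (C * ‖x‖ ^ 2) := by
    have a1 := le_abs_self (⟪T (x + y), x + y⟫_ℂ).re
    have a2 := neg_abs_le (⟪T (x - y), x - y⟫_ℂ).re
    have h3 : 4 * (c * ‖T x‖ ^ 2) ≤ C * ‖x + y‖ ^ 2 + C * ‖x - y‖ ^ 2 := by
      rw [← key]; linarith
    calc 4 * (c * ‖T x‖ ^ 2) ≤ C * ‖x + y‖ ^ 2 + C * ‖x - y‖ ^ 2 := h3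
      _ = C * (‖x + y‖ ^ 2 + ‖x - y‖ ^ 2) := by ring
      _ = C * (2 * (‖x‖ ^ 2 + ‖y‖ ^ 2)) := by rw [hpar]
      _ = 4 * (C * ‖x‖ ^ 2) := by rw [hyn]; ring
  have hcx : c * ‖T x‖ ^ 2 = ‖x‖ * ‖T x‖ := by
    rw [hc]; field_simp
  rw [hcx] at hb
  have h4 : ‖x‖ * ‖T x‖ ≤ C * ‖x‖ ^ 2 := by linarith
  nlinarith

/-- Entry bound for PSD matrices: `|A j k| ≤ √(A j j * A k k)`. -/
lemma stmt3_entry_bound {d : ℕ} {q : Fin d → ℝ} (hq : ∀ k, 0 ≤ q k)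
    {A : Matrix (Fin d) (Fin d) ℂ}
    (hA : A.PosSemidef) (hd : ∀ k, A k k = (q k : ℂ)) (j k : Fin d) :
    ‖A j k‖ ≤ Real.sqrt (q j * q k) := by
  by_cases hjk : j = k
  · subst hjk
    rw [hd j, Real.sqrt_mul_self (hq j)]
    simp [abs_of_nonneg (hq j)]
  by_cases hα : A j k = 0
  · rw [hα]
    simpa using Real.sqrt_nonneg _
  set α := A j k with hαdef
  have hkj : A k j = (starRingEnd ℂ) α := by
    rw [hαdef, ← hA.isHermitian.apply k j]
    rfl
  set a : ℝ := ‖α‖ with ha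
  have hapos : 0 < a := by
    rw [ha]
    exact norm_pos_iff.2 hα
  have hαconj : α * (starRingEnd ℂ) α = ((a : ℝ) : ℂ) ^ 2 := by
    rw [Complex.mul_conj, ha]
    norm_cast
    exact (Complex.sq_norm α).symm
  set w : ℂ := -((starRingEnd ℂ) α / (a : ℂ)) with hw
  have han : (a : ℂ) ≠ 0 := by exact_mod_cast hapos.ne'
  have hw1 : α * w = -(a : ℂ) := by
    rw [hw]
    field_simp
    linear_combination (-1 : ℂ) * hαconj
  have hw2 : (starRingEnd ℂ) w * (starRingEnd ℂ) α = -(a : ℂ) := by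
    rw [hw]
    simp only [map_neg, map_div₀, Complex.conj_conj, Complex.conj_ofReal]
    field_simp
    linear_combination (-1 : ℂ) * hαconj
  have hw3 : (starRingEnd ℂ) w * w = 1 := by
    rw [hw]
    simp only [map_neg, map_div₀, Complex.conj_conj, Complex.conj_ofReal]
    field_simp
    linear_combination hαconj
  have hsingle : ∀ (i : Fin d) (z : ℂ),
      star (Pi.single i z : Fin d → ℂ) = Pi.single i ((starRingEnd ℂ) z) := by
    intro i z
    ext l
    simp [Pi.single_apply, apply_ite (starRingEnd ℂ)]
  have hquad : ∀ t : ℝ, 0 ≤ q j * (t * t) + -(2 * a) * t + q k := by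
    intro t
    set x : Fin d → ℂ := Pi.single j (t : ℂ) + Pi.single k w with hx
    have h0 := hA.re_dotProduct_nonneg x
    have hval : dotProduct (star x) (A *ᵥ x)
        = ((q j * (t * t) + -(2 * a) * t + q k : ℝ) : ℂ) := by
      rw [hx, star_add, hsingle, hsingle, mulVec_add, mulVec_single, mulVec_single,
        add_dotProduct, single_dotProduct, single_dotProduct]
      simp only [Pi.add_apply, Complex.conj_ofReal, Pi.smul_apply, Matrix.col_apply, op_smul_eq_mul]
      have expand : (t : ℂ) * (A j j * (t : ℂ) + A j k * w)
          + (starRingEnd ℂ) w * (A k j * (t : ℂ) + A k k * w)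
          = (t : ℂ) * A j j * (t : ℂ) + (α * w) * (t : ℂ)
            + ((starRingEnd ℂ) w * (starRingEnd ℂ) α) * (t : ℂ)
            + A k k * ((starRingEnd ℂ) w * w) := by
        rw [hkj, ← hαdef]
        ring
      rw [expand, hw1, hw2, hw3, hd j, hd k]
      push_cast
      ring
    rw [hval] at h0
    simpa using h0
  have hdisc := discrim_le_zero hquad
  rw [discrim] at hdisc
  have hsq : a ^ 2 ≤ q j * q k := by nlinarith
  calc ‖A j k‖ = a := rfl
    _ = Real.sqrt (a ^ 2) := (Real.sqrt_sq hapos.le).symm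
    _ ≤ Real.sqrt (q j * q k) := Real.sqrt_le_sqrt hsq

/-- Quadratic form of `toEuclideanCLM` as a double sum. -/
lemma stmt3_inner_formula {d : ℕ} (B : Matrix (Fin d) (Fin d) ℂ)
    (v : EuclideanSpace ℂ (Fin d)) :
    ⟪v, Matrix.toEuclideanCLM (𝕜 := ℂ) B v⟫_ℂ
      = ∑ i, ∑ l, (starRingEnd ℂ) (v i) * (B i l * v l) := by
  have happ : ∀ i, (Matrix.toEuclideanCLM (𝕜 := ℂ) B v) i = ∑ l, B i l * v l := by
    intro i
    have := congrFun (Matrix.ofLp_toEuclideanCLM B v) i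
    simpa [Matrix.mulVec, dotProduct] using this
  rw [PiLp.inner_apply]
  simp only [RCLike.inner_apply, happ, Finset.mul_sum]
  refine Finset.sum_congr rfl fun i _ => ?_
  rw [Finset.sum_mul]
  exact Finset.sum_congr rfl fun l _ => mul_comm _ _

/-- for PSD `Q`, `R` with prescribed diagonals `q`, `r`,
`‖Q + R‖ ≤ ‖Q̂ + R̂‖` for the operator norm, where `Q̂ = [√(q_j q_k)]`, `R̂ = [√(r_j r_k)]`. -/
theorem stmt3 (d : ℕ) (q r : Fin d → ℝ) (hq : ∀ k, 0 ≤ q k) (hr : ∀ k, 0 ≤ r k)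
    (Q R : Matrix (Fin d) (Fin d) ℂ) (hQ : Q.PosSemidef) (hR : R.PosSemidef)
    (hdQ : ∀ k, Q k k = (q k : ℂ)) (hdR : ∀ k, R k k = (r k : ℂ)) :
    ‖Matrix.toEuclideanCLM (𝕜 := ℂ) (Q + R)‖ ≤
      ‖Matrix.toEuclideanCLM (𝕜 := ℂ)
        (Matrix.of fun j k : Fin d =>
          ((Real.sqrt (q j * q k) : ℂ) + (Real.sqrt (r j * r k) : ℂ)))‖ := by
  set M : Matrix (Fin d) (Fin d) ℂ :=
    Matrix.of fun j k : Fin d =>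
      ((Real.sqrt (q j * q k) : ℂ) + (Real.sqrt (r j * r k) : ℂ)) with hM
  set S := Matrix.toEuclideanCLM (𝕜 := ℂ) M with hS
  set T := Matrix.toEuclideanCLM (𝕜 := ℂ) (Q + R) with hT
  have hQR : (Q + R).PosSemidef := hQ.add hR
  have hsymm : ∀ x y : EuclideanSpace ℂ (Fin d), ⟪T x, y⟫_ℂ = ⟪x, T y⟫_ℂ := by
    have hsym := (Matrix.isHermitian_iff_isSymmetric).mp hQR.isHermitian
    intro x y
    have hx : T x = Matrix.toEuclideanLin (Q + R) x := by
      rw [hT, ← Matrix.coe_toEuclideanCLM_eq_toEuclideanLin]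
      rfl
    have hy : T y = Matrix.toEuclideanLin (Q + R) y := by
      rw [hT, ← Matrix.coe_toEuclideanCLM_eq_toEuclideanLin]
      rfl
    rw [hx, hy]
    exact hsym x y
  refine stmt3_aux_norm_le T hsymm (norm_nonneg S) fun x => ?_
  -- pass from ⟪T x, x⟫ to ⟪x, T x⟫
  have hre : (⟪T x, x⟫_ℂ).re = (⟪x, T x⟫_ℂ).re := by
    rw [← inner_conj_symm, Complex.conj_re]
  -- the comparison vector of absolute values
  set y : EuclideanSpace ℂ (Fin d) := WithLp.toLp 2 (fun i => ((‖x i‖ : ℝ) : ℂ)) with hy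
  have hyx : ‖y‖ = ‖x‖ := by
    rw [EuclideanSpace.norm_eq, EuclideanSpace.norm_eq]
    congr 1
    refine Finset.sum_congr rfl fun i _ => ?_
    simp [hy, abs_of_nonneg (norm_nonneg _)]
  -- nonnegativity of the quadratic form
  have hpos : 0 ≤ (⟪x, T x⟫_ℂ).re := by
    rw [hT, stmt3_inner_formula]
    have h0 := hQR.re_dotProduct_nonneg (fun i => x i)
    simpa [dotProduct, Matrix.mulVec, Finset.mul_sum, mul_assoc] using h0
  -- termwise comparison
  have hterm : ∀ i l : Fin d,
      ((starRingEnd ℂ) (x i) * ((Q + R) i l * x l)).re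
        ≤ ((starRingEnd ℂ) (y i) * (M i l * y l)).re := by
    intro i l
    have hQb := stmt3_entry_bound hq hQ hdQ i l
    have hRb := stmt3_entry_bound hr hR hdR i l
    have hMil : M i l = ((Real.sqrt (q i * q l) + Real.sqrt (r i * r l) : ℝ) : ℂ) := by
      rw [hM]
      push_cast
      rfl
    have hright : ((starRingEnd ℂ) (y i) * (M i l * y l)).re
        = ‖x i‖ * ((Real.sqrt (q i * q l) + Real.sqrt (r i * r l))
            * ‖x l‖) := by
      rw [hy, hMil]
      simp only [PiLp.toLp_apply, Complex.conj_ofReal, ← Complex.ofReal_mul]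
      exact Complex.ofReal_re _
    rw [hright]
    have habs : ‖(Q + R) i l‖
        ≤ Real.sqrt (q i * q l) + Real.sqrt (r i * r l) := by
      calc ‖(Q + R) i l‖ = ‖Q i l + R i l‖ := by
            rw [Matrix.add_apply]
        _ ≤ ‖Q i l‖ + ‖R i l‖ := norm_add_le _ _
        _ ≤ Real.sqrt (q i * q l) + Real.sqrt (r i * r l) := add_le_add hQb hRb
    calc ((starRingEnd ℂ) (x i) * ((Q + R) i l * x l)).re
        ≤ ‖(starRingEnd ℂ) (x i) * ((Q + R) i l * x l)‖ :=
          Complex.re_le_norm _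
      _ = ‖x i‖ * (‖(Q + R) i l‖ * ‖x l‖) := by
          rw [norm_mul, norm_mul, Complex.norm_conj]
      _ ≤ ‖x i‖ * ((Real.sqrt (q i * q l) + Real.sqrt (r i * r l))
            * ‖x l‖) := by
          have h1 : (0:ℝ) ≤ ‖x i‖ := norm_nonneg _
          have h2 : (0:ℝ) ≤ ‖x l‖ := norm_nonneg _
          exact mul_le_mul_of_nonneg_left
            (mul_le_mul_of_nonneg_right habs h2) h1
  have hcomp : (⟪x, T x⟫_ℂ).re ≤ (⟪y, S y⟫_ℂ).re := by
    rw [hT, hS, stmt3_inner_formula, stmt3_inner_formula, Complex.re_sum, Complex.re_sum]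
    refine Finset.sum_le_sum fun i _ => ?_
    rw [Complex.re_sum, Complex.re_sum]
    exact Finset.sum_le_sum fun l _ => hterm i l
  have hfin : (⟪y, S y⟫_ℂ).re ≤ ‖S‖ * ‖x‖ ^ 2 := by
    calc (⟪y, S y⟫_ℂ).re ≤ ‖⟪y, S y⟫_ℂ‖ := Complex.re_le_norm _
      _ = ‖⟪y, S y⟫_ℂ‖ := rfl
      _ ≤ ‖y‖ * ‖S y‖ := norm_inner_le_norm _ _
      _ ≤ ‖y‖ * (‖S‖ * ‖y‖) := by
          exact mul_le_mul_of_nonneg_left (S.le_opNorm y) (norm_nonneg _)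
      _ = ‖S‖ * ‖x‖ ^ 2 := by rw [hyx]; ring
  rw [hre, abs_of_nonneg hpos]
  exact le_trans (le_trans hcomp hfin) (le_of_eq rfl)
end

section
/- For the matrix C_ε = [[ε,1,ε],[1,ε,1],[ε,1,1]] with ε → 0⁺ and p = 3/2, the (1,1) entry of the polar power C^{[p−1]} = (CC^T)^{(p−2)/2} C converges to a strictly positive limit, while the (1,1) entry of the entrywise power C^{∘(1−p)} is ε^{−1/2} → +∞; consequently the inequality Tr (A^{∘p})^T (C^{[p−1]} ∘ C^{∘(1−p)}) ≤ Tr|A|^p fails for 3×3 nonnegative matrices, giving a counterexample to convexity of B ↦ ‖B^{∘1/p}‖_p^p on M₃(ℝ⁺) for p = 3/2. -/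
open Matrix

/-- The Schatten `p`-norm of a real square matrix, defined via the eigenvalues of `MᴴM`
(the squares of the singular values of `M`). -/
noncomputable def schattenR {n : Type*} [Fintype n] [DecidableEq n] (p : ℝ)
    (M : Matrix n n ℝ) : ℝ :=
  (∑ i, (Matrix.isHermitian_conjTranspose_mul_self M).eigenvalues i ^ (p / 2)) ^ (1 / p)

/-- `g_p(B) = ‖B^{∘1/p}‖_p^p`, where `B^{∘1/p}` is the entrywise (Hadamard) power. -/
noncomputable def gFun {n : Type*} [Fintype n] [DecidableEq n] (p : ℝ)
    (B : Matrix n n ℝ) : ℝ :=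
  schattenR p (Matrix.of fun i j => B i j ^ (1 / p)) ^ p

section Helpers

variable {a b c : ℝ}
lemma sgn_thd_pos (ha : 0 < a) (hb : 0 < b) (h : 0 < a * b * c) : 0 < c := by
  nlinarith [mul_pos ha hb]
lemma sgn_thd_neg (ha : 0 < a) (hb : 0 < b) (h : a * b * c < 0) : c < 0 := by
  nlinarith [mul_pos ha hb]
lemma sgn_mid_neg_pnc (ha : 0 < a) (hc : c < 0) (h : 0 < a * b * c) : b < 0 := by
  nlinarith [mul_pos ha (neg_pos.mpr hc)]
lemma sgn_fst_neg_pnc (hb : 0 < b) (hc : c < 0) (h : 0 < a * b * c) : a < 0 := by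
  nlinarith [mul_pos hb (neg_pos.mpr hc)]
lemma sgn_fst_neg_nn (hb : b < 0) (hc : c < 0) (h : a * b * c < 0) : a < 0 := by
  nlinarith [mul_pos (neg_pos.mpr hb) (neg_pos.mpr hc)]
lemma sgn_mid_neg_nn (ha : a < 0) (hc : c < 0) (h : a * b * c < 0) : b < 0 := by
  nlinarith [mul_pos (neg_pos.mpr ha) (neg_pos.mpr hc)]
lemma two_neg_r (hc : c < 0) (h : 0 < a * c) : a < 0 := by nlinarith
lemma two_snd_neg (ha : 0 < a) (h : a * b < 0) : b < 0 := by nlinarith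
lemma two_snd_pos (ha : a ≤ 0) (h : a * b < 0) : 0 < b := by nlinarith
lemma two_fst_neg (hb : 0 < b) (h : a * b < 0) : a < 0 := by nlinarith

end Helpers

lemma detFactor {n : Type*} [Fintype n] [DecidableEq n] {A : Matrix n n ℝ} (hA : A.IsHermitian)
    (x : ℝ) : det (x • (1 : Matrix n n ℝ) - A) = ∏ i, (x - hA.eigenvalues i) := by
  conv_lhs => rw [hA.spectral_theorem, Unitary.conjStarAlgAut_apply]
  set U : Matrix n n ℝ := (hA.eigenvectorUnitary : Matrix n n ℝ) with hU
  have hUU : U * star U = 1 := (Matrix.mem_unitaryGroup_iff).mp hA.eigenvectorUnitary.2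
  have hUU' : star U * U = 1 := (Matrix.mem_unitaryGroup_iff').mp hA.eigenvectorUnitary.2
  have key : x • (1 : Matrix n n ℝ) - U * diagonal (RCLike.ofReal ∘ hA.eigenvalues) * star U
      = U * (x • (1 : Matrix n n ℝ) - diagonal (RCLike.ofReal ∘ hA.eigenvalues)) * star U := by
    rw [Matrix.mul_sub, Matrix.sub_mul]
    congr 1
    rw [Matrix.mul_smul, Matrix.mul_one, Matrix.smul_mul, hUU]
  rw [key, det_mul, det_mul, mul_comm, ← mul_assoc, ← det_mul, ← det_mul, Matrix.mul_assoc,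
    ← Matrix.mul_assoc, hUU', Matrix.one_mul]
  rw [Matrix.smul_one_eq_diagonal, diagonal_sub, det_diagonal]
  simp [RCLike.ofReal_real_eq_id]

-- key scaling lemma
lemma prodShift (M : Matrix (Fin 3) (Fin 3) ℝ) {κ : ℝ} (G : Matrix (Fin 3) (Fin 3) ℝ)
    (hGram : Mᴴ * M = κ • G) (q : ℝ) :
    (q * κ - (isHermitian_conjTranspose_mul_self M).eigenvalues 0) *
    (q * κ - (isHermitian_conjTranspose_mul_self M).eigenvalues 1) *
    (q * κ - (isHermitian_conjTranspose_mul_self M).eigenvalues 2)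
      = κ ^ (3:ℕ) * det (q • (1 : Matrix (Fin 3) (Fin 3) ℝ) - G) := by
  have h := detFactor (isHermitian_conjTranspose_mul_self M) (q * κ)
  rw [Fin.prod_univ_three] at h
  rw [← h, hGram]
  have h2 : (q * κ) • (1 : Matrix (Fin 3) (Fin 3) ℝ) - κ • G
      = κ • (q • (1 : Matrix (Fin 3) (Fin 3) ℝ) - G) := by
    rw [smul_sub, smul_smul, mul_comm]
  rw [h2, det_smul]
  norm_num


lemma pin3_aux {μ0 μ1 μ2 l1 u1 l2 u2 l3 u3 : ℝ}
    (o1 : l1 < u1) (o2 : u1 ≤ l2) (o3 : l2 < u2) (o4 : u2 ≤ l3) (o5 : l3 < u3)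
    (hl1 : (l1 - μ0) * (l1 - μ1) * (l1 - μ2) < 0)
    (hu1 : 0 < (u1 - μ0) * (u1 - μ1) * (u1 - μ2))
    (hl2 : 0 < (l2 - μ0) * (l2 - μ1) * (l2 - μ2))
    (hl3 : (l3 - μ0) * (l3 - μ1) * (l3 - μ2) < 0)
    (hu3 : 0 < (u3 - μ0) * (u3 - μ1) * (u3 - μ2))
    (ht : u2 < μ2) (hb0 : μ0 < u2) (hb1 : μ1 < u2) :
    ((l1 < μ0 ∧ μ0 < u1) ∧ (l2 < μ1 ∧ μ1 < u2) ∨ (l1 < μ1 ∧ μ1 < u1) ∧ (l2 < μ0 ∧ μ0 < u2))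
      ∧ (l3 < μ2 ∧ μ2 < u3) := by
  have a0 : 0 < u3 - μ0 := by linarith
  have a1 : 0 < u3 - μ1 := by linarith
  have hμ2u3 : μ2 < u3 := by have := sgn_thd_pos a0 a1 hu3; linarith
  have b0 : 0 < l3 - μ0 := by linarith
  have b1 : 0 < l3 - μ1 := by linarith
  have hμ2l3 : l3 < μ2 := by have := sgn_thd_neg b0 b1 hl3; linarith
  have c2 : u1 - μ2 < 0 := by linarith
  have h12 : (u1 - μ0) * (u1 - μ1) < 0 := two_neg_r c2 hu1
  rcases lt_or_ge μ0 u1 with h0 | h0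
  · have hμ1u1 : u1 < μ1 := by
      have := two_snd_neg (by linarith : (0:ℝ) < u1 - μ0) h12; linarith
    have hμ1l2 : l2 < μ1 := by
      have := sgn_mid_neg_pnc (by linarith : (0:ℝ) < l2 - μ0) (by linarith : l2 - μ2 < 0) hl2
      linarith
    have hμ0l1 : l1 < μ0 := by
      have := sgn_fst_neg_nn (by linarith : l1 - μ1 < 0) (by linarith : l1 - μ2 < 0) hl1
      linarith
    exact ⟨Or.inl ⟨⟨hμ0l1, h0⟩, hμ1l2, hb1⟩, hμ2l3, hμ2u3⟩
  · have hμ1u1 : μ1 < u1 := by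
      have := two_snd_pos (by linarith : u1 - μ0 ≤ 0) h12; linarith
    have hμ0u1 : u1 < μ0 := by
      have := two_fst_neg (by linarith : (0:ℝ) < u1 - μ1) h12; linarith
    have hμ0l2 : l2 < μ0 := by
      have := sgn_fst_neg_pnc (by linarith : (0:ℝ) < l2 - μ1) (by linarith : l2 - μ2 < 0) hl2
      linarith
    have hμ1l1 : l1 < μ1 := by
      have := sgn_mid_neg_nn (by linarith : l1 - μ0 < 0) (by linarith : l1 - μ2 < 0) hl1
      linarith
    exact ⟨Or.inr ⟨⟨hμ1l1, hμ1u1⟩, hμ0l2, hb0⟩, hμ2l3, hμ2u3⟩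

lemma pin3 {μ0 μ1 μ2 l1 u1 l2 u2 l3 u3 : ℝ}
    (o1 : l1 < u1) (o2 : u1 ≤ l2) (o3 : l2 < u2) (o4 : u2 ≤ l3) (o5 : l3 < u3)
    (hl1 : (l1 - μ0) * (l1 - μ1) * (l1 - μ2) < 0)
    (hu1 : 0 < (u1 - μ0) * (u1 - μ1) * (u1 - μ2))
    (hl2 : 0 < (l2 - μ0) * (l2 - μ1) * (l2 - μ2))
    (hu2 : (u2 - μ0) * (u2 - μ1) * (u2 - μ2) < 0)
    (hl3 : (l3 - μ0) * (l3 - μ1) * (l3 - μ2) < 0)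
    (hu3 : 0 < (u3 - μ0) * (u3 - μ1) * (u3 - μ2)) :
    ((l1 < μ0 ∧ μ0 < u1) ∧ (l2 < μ1 ∧ μ1 < u2) ∧ (l3 < μ2 ∧ μ2 < u3)) ∨
    ((l1 < μ0 ∧ μ0 < u1) ∧ (l2 < μ2 ∧ μ2 < u2) ∧ (l3 < μ1 ∧ μ1 < u3)) ∨
    ((l1 < μ1 ∧ μ1 < u1) ∧ (l2 < μ0 ∧ μ0 < u2) ∧ (l3 < μ2 ∧ μ2 < u3)) ∨
    ((l1 < μ1 ∧ μ1 < u1) ∧ (l2 < μ2 ∧ μ2 < u2) ∧ (l3 < μ0 ∧ μ0 < u3)) ∨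
    ((l1 < μ2 ∧ μ2 < u1) ∧ (l2 < μ0 ∧ μ0 < u2) ∧ (l3 < μ1 ∧ μ1 < u3)) ∨
    ((l1 < μ2 ∧ μ2 < u1) ∧ (l2 < μ1 ∧ μ1 < u2) ∧ (l3 < μ0 ∧ μ0 < u3)) := by
  have hne0 : μ0 ≠ u2 := by rintro rfl; simp [sub_self] at hu2
  have hne1 : μ1 ≠ u2 := by rintro rfl; simp [sub_self] at hu2
  have hne2 : μ2 ≠ u2 := by rintro rfl; simp [sub_self] at hu2
  rcases lt_or_ge μ0 u2 with h0 | h0 <;> rcases lt_or_ge μ1 u2 with h1 | h1 <;>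
    rcases lt_or_ge μ2 u2 with h2 | h2
  · -- all below : contradiction
    have := mul_pos (mul_pos (show (0:ℝ) < u2 - μ0 by linarith)
      (show (0:ℝ) < u2 - μ1 by linarith)) (show (0:ℝ) < u2 - μ2 by linarith)
    linarith
  · -- μ2 above
    have h2' : u2 < μ2 := lt_of_le_of_ne h2 (Ne.symm hne2)
    rcases pin3_aux o1 o2 o3 o4 o5 hl1 hu1 hl2 hl3 hu3 h2' h0 h1 with ⟨hor, h3⟩
    rcases hor with ⟨ha, hb⟩ | ⟨ha, hb⟩
    · exact Or.inl ⟨ha, hb, h3⟩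
    · exact Or.inr (Or.inr (Or.inl ⟨ha, hb, h3⟩))
  · -- μ1 above
    have h1' : u2 < μ1 := lt_of_le_of_ne h1 (Ne.symm hne1)
    have hl1' : (l1 - μ0) * (l1 - μ2) * (l1 - μ1) < 0 := by rw [← mul_right_comm]; exact hl1
    have hu1' : 0 < (u1 - μ0) * (u1 - μ2) * (u1 - μ1) := by rw [← mul_right_comm]; exact hu1
    have hl2' : 0 < (l2 - μ0) * (l2 - μ2) * (l2 - μ1) := by rw [← mul_right_comm]; exact hl2
    have hl3' : (l3 - μ0) * (l3 - μ2) * (l3 - μ1) < 0 := by rw [← mul_right_comm]; exact hl3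
    have hu3' : 0 < (u3 - μ0) * (u3 - μ2) * (u3 - μ1) := by rw [← mul_right_comm]; exact hu3
    rcases pin3_aux o1 o2 o3 o4 o5 hl1' hu1' hl2' hl3' hu3' h1' h0 h2 with ⟨hor, h3⟩
    rcases hor with ⟨ha, hb⟩ | ⟨ha, hb⟩
    · exact Or.inr (Or.inl ⟨ha, hb, h3⟩)
    · exact Or.inr (Or.inr (Or.inr (Or.inr (Or.inl ⟨ha, hb, h3⟩))))
  · -- μ1, μ2 above : contradiction at u2
    have h1' : u2 < μ1 := lt_of_le_of_ne h1 (Ne.symm hne1)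
    have h2' : u2 < μ2 := lt_of_le_of_ne h2 (Ne.symm hne2)
    have Q : 0 < (μ1 - u2) * (μ2 - u2) * (u2 - μ0) :=
      mul_pos (mul_pos (by linarith) (by linarith)) (by linarith)
    have E : (μ1 - u2) * (μ2 - u2) * (u2 - μ0) = (u2 - μ0) * (u2 - μ1) * (u2 - μ2) := by ring
    linarith
  · -- μ0 above
    have h0' : u2 < μ0 := lt_of_le_of_ne h0 (Ne.symm hne0)
    have hl1' : (l1 - μ1) * (l1 - μ2) * (l1 - μ0) < 0 := by rw [← mul_rotate]; exact hl1
    have hu1' : 0 < (u1 - μ1) * (u1 - μ2) * (u1 - μ0) := by rw [← mul_rotate]; exact hu1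
    have hl2' : 0 < (l2 - μ1) * (l2 - μ2) * (l2 - μ0) := by rw [← mul_rotate]; exact hl2
    have hl3' : (l3 - μ1) * (l3 - μ2) * (l3 - μ0) < 0 := by rw [← mul_rotate]; exact hl3
    have hu3' : 0 < (u3 - μ1) * (u3 - μ2) * (u3 - μ0) := by rw [← mul_rotate]; exact hu3
    rcases pin3_aux o1 o2 o3 o4 o5 hl1' hu1' hl2' hl3' hu3' h0' h1 h2 with ⟨hor, h3⟩
    rcases hor with ⟨ha, hb⟩ | ⟨ha, hb⟩
    · exact Or.inr (Or.inr (Or.inr (Or.inl ⟨ha, hb, h3⟩)))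
    · exact Or.inr (Or.inr (Or.inr (Or.inr (Or.inr ⟨ha, hb, h3⟩))))
  · -- μ0, μ2 above : contradiction
    have h0' : u2 < μ0 := lt_of_le_of_ne h0 (Ne.symm hne0)
    have h2' : u2 < μ2 := lt_of_le_of_ne h2 (Ne.symm hne2)
    have Q : 0 < (μ0 - u2) * (μ2 - u2) * (u2 - μ1) :=
      mul_pos (mul_pos (by linarith) (by linarith)) (by linarith)
    have E : (μ0 - u2) * (μ2 - u2) * (u2 - μ1) = (u2 - μ0) * (u2 - μ1) * (u2 - μ2) := by ring
    linarith
  · -- μ0, μ1 above : contradiction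
    have h0' : u2 < μ0 := lt_of_le_of_ne h0 (Ne.symm hne0)
    have h1' : u2 < μ1 := lt_of_le_of_ne h1 (Ne.symm hne1)
    have Q : 0 < (μ0 - u2) * (μ1 - u2) * (u2 - μ2) :=
      mul_pos (mul_pos (by linarith) (by linarith)) (by linarith)
    have E : (μ0 - u2) * (μ1 - u2) * (u2 - μ2) = (u2 - μ0) * (u2 - μ1) * (u2 - μ2) := by ring
    linarith
  · -- all above : contradiction at u1
    have Q : 0 < (μ0 - u1) * (μ1 - u1) * (μ2 - u1) :=
      mul_pos (mul_pos (by linarith) (by linarith)) (by linarith)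
    have E : (μ0 - u1) * (μ1 - u1) * (μ2 - u1) = -((u1 - μ0) * (u1 - μ1) * (u1 - μ2)) := by ring
    linarith

lemma rpow34_natpow {u : ℝ} (hu : 0 ≤ u) : u ^ ((3:ℝ)/4) = (u ^ (3:ℕ)) ^ ((1:ℝ)/4) := by
  rw [← Real.rpow_natCast u 3, ← Real.rpow_mul hu]
  norm_num

lemma bnd_up {μ u s κ K : ℝ} (h0 : 0 ≤ μ) (hκ : 0 < κ) (h : μ ≤ u * κ)
    (hκ34 : κ ^ ((3:ℝ)/4) = K) (hu : 0 ≤ u) (hs : 0 ≤ s) (hK : 0 ≤ K)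
    (hcert : u ^ (3:ℕ) ≤ s ^ (4:ℕ)) : μ ^ ((3:ℝ)/4) ≤ K * s := by
  have h1 : μ ^ ((3:ℝ)/4) ≤ (u * κ) ^ ((3:ℝ)/4) :=
    Real.rpow_le_rpow h0 h (by norm_num)
  rw [Real.mul_rpow hu hκ.le, hκ34] at h1
  have h2 : u ^ ((3:ℝ)/4) ≤ s := by
    rw [rpow34_natpow hu]
    calc (u ^ (3:ℕ)) ^ ((1:ℝ)/4) ≤ (s ^ (4:ℕ)) ^ ((1:ℝ)/4) :=
          Real.rpow_le_rpow (by positivity) (by exact_mod_cast hcert) (by norm_num)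
      _ = s := by
          rw [← Real.rpow_natCast s 4, ← Real.rpow_mul hs]; norm_num
  nlinarith [h1, h2, hK]

lemma bnd_lo {μ l s κ K : ℝ} (hκ : 0 < κ) (hl : 0 ≤ l) (h : l * κ ≤ μ)
    (hκ34 : κ ^ ((3:ℝ)/4) = K) (hs : 0 ≤ s) (hK : 0 ≤ K)
    (hcert : s ^ (4:ℕ) ≤ l ^ (3:ℕ)) : K * s ≤ μ ^ ((3:ℝ)/4) := by
  have hlκ : 0 ≤ l * κ := by positivity
  have h1 : (l * κ) ^ ((3:ℝ)/4) ≤ μ ^ ((3:ℝ)/4) :=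
    Real.rpow_le_rpow hlκ h (by norm_num)
  rw [Real.mul_rpow hl hκ.le, hκ34] at h1
  have h2 : s ≤ l ^ ((3:ℝ)/4) := by
    rw [rpow34_natpow hl]
    calc s = (s ^ (4:ℕ)) ^ ((1:ℝ)/4) := by
          rw [← Real.rpow_natCast s 4, ← Real.rpow_mul hs]; norm_num
      _ ≤ (l ^ (3:ℕ)) ^ ((1:ℝ)/4) :=
          Real.rpow_le_rpow (by positivity) (by exact_mod_cast hcert) (by norm_num)
  nlinarith [h1, h2, hK]


lemma sumBounds (M : Matrix (Fin 3) (Fin 3) ℝ) {κ K : ℝ} (hκ : 0 < κ) (hK : 0 ≤ K)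
    (hκ34 : κ ^ ((3:ℝ)/4) = K)
    (G : Matrix (Fin 3) (Fin 3) ℝ) (hGram : Mᴴ * M = κ • G)
    {l1 u1 l2 u2 l3 u3 s1 s2 s3 t1 t2 t3 : ℝ}
    (o0 : 0 ≤ l1) (o1 : l1 < u1) (o2 : u1 ≤ l2) (o3 : l2 < u2) (o4 : u2 ≤ l3) (o5 : l3 < u3)
    (d1 : det (l1 • (1:Matrix (Fin 3) (Fin 3) ℝ) - G) < 0)
    (d2 : 0 < det (u1 • (1:Matrix (Fin 3) (Fin 3) ℝ) - G))
    (d3 : 0 < det (l2 • (1:Matrix (Fin 3) (Fin 3) ℝ) - G))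
    (d4 : det (u2 • (1:Matrix (Fin 3) (Fin 3) ℝ) - G) < 0)
    (d5 : det (l3 • (1:Matrix (Fin 3) (Fin 3) ℝ) - G) < 0)
    (d6 : 0 < det (u3 • (1:Matrix (Fin 3) (Fin 3) ℝ) - G))
    (ht1 : 0 ≤ t1) (ht2 : 0 ≤ t2) (ht3 : 0 ≤ t3) (hs1 : 0 ≤ s1) (hs2 : 0 ≤ s2) (hs3 : 0 ≤ s3)
    (c1 : u1 ^ (3:ℕ) ≤ s1 ^ (4:ℕ)) (c2 : u2 ^ (3:ℕ) ≤ s2 ^ (4:ℕ)) (c3 : u3 ^ (3:ℕ) ≤ s3 ^ (4:ℕ))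
    (c1' : t1 ^ (4:ℕ) ≤ l1 ^ (3:ℕ)) (c2' : t2 ^ (4:ℕ) ≤ l2 ^ (3:ℕ))
    (c3' : t3 ^ (4:ℕ) ≤ l3 ^ (3:ℕ)) :
    K * (t1 + t2 + t3)
        ≤ (∑ i, ((Matrix.isHermitian_conjTranspose_mul_self M).eigenvalues i) ^ ((3:ℝ)/4))
    ∧ (∑ i, ((Matrix.isHermitian_conjTranspose_mul_self M).eigenvalues i) ^ ((3:ℝ)/4))
        ≤ K * (s1 + s2 + s3) := by
  have hκ3 : (0:ℝ) < κ ^ (3:ℕ) := pow_pos hκ 3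
  have hnn : ∀ i, (0:ℝ) ≤ (Matrix.isHermitian_conjTranspose_mul_self M).eigenvalues i := fun i =>
    (Matrix.posSemidef_conjTranspose_mul_self _).eigenvalues_nonneg i
  have hl1 := prodShift M G hGram l1
  have hu1 := prodShift M G hGram u1
  have hl2 := prodShift M G hGram l2
  have hu2 := prodShift M G hGram u2
  have hl3 := prodShift M G hGram l3
  have hu3 := prodShift M G hGram u3
  have e1 : (l1*κ - (Matrix.isHermitian_conjTranspose_mul_self M).eigenvalues 0) *
      (l1*κ - (Matrix.isHermitian_conjTranspose_mul_self M).eigenvalues 1) *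
      (l1*κ - (Matrix.isHermitian_conjTranspose_mul_self M).eigenvalues 2) < 0 := by
    rw [hl1]; exact mul_neg_of_pos_of_neg hκ3 d1
  have e2 : 0 < (u1*κ - (Matrix.isHermitian_conjTranspose_mul_self M).eigenvalues 0) *
      (u1*κ - (Matrix.isHermitian_conjTranspose_mul_self M).eigenvalues 1) *
      (u1*κ - (Matrix.isHermitian_conjTranspose_mul_self M).eigenvalues 2) := by
    rw [hu1]; exact mul_pos hκ3 d2
  have e3 : 0 < (l2*κ - (Matrix.isHermitian_conjTranspose_mul_self M).eigenvalues 0) *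
      (l2*κ - (Matrix.isHermitian_conjTranspose_mul_self M).eigenvalues 1) *
      (l2*κ - (Matrix.isHermitian_conjTranspose_mul_self M).eigenvalues 2) := by
    rw [hl2]; exact mul_pos hκ3 d3
  have e4 : (u2*κ - (Matrix.isHermitian_conjTranspose_mul_self M).eigenvalues 0) *
      (u2*κ - (Matrix.isHermitian_conjTranspose_mul_self M).eigenvalues 1) *
      (u2*κ - (Matrix.isHermitian_conjTranspose_mul_self M).eigenvalues 2) < 0 := by
    rw [hu2]; exact mul_neg_of_pos_of_neg hκ3 d4
  have e5 : (l3*κ - (Matrix.isHermitian_conjTranspose_mul_self M).eigenvalues 0) *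
      (l3*κ - (Matrix.isHermitian_conjTranspose_mul_self M).eigenvalues 1) *
      (l3*κ - (Matrix.isHermitian_conjTranspose_mul_self M).eigenvalues 2) < 0 := by
    rw [hl3]; exact mul_neg_of_pos_of_neg hκ3 d5
  have e6 : 0 < (u3*κ - (Matrix.isHermitian_conjTranspose_mul_self M).eigenvalues 0) *
      (u3*κ - (Matrix.isHermitian_conjTranspose_mul_self M).eigenvalues 1) *
      (u3*κ - (Matrix.isHermitian_conjTranspose_mul_self M).eigenvalues 2) := by
    rw [hu3]; exact mul_pos hκ3 d6
  have q1 : l1 * κ < u1 * κ := mul_lt_mul_of_pos_right o1 hκ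
  have q2 : u1 * κ ≤ l2 * κ := mul_le_mul_of_nonneg_right o2 hκ.le
  have q3 : l2 * κ < u2 * κ := mul_lt_mul_of_pos_right o3 hκ
  have q4 : u2 * κ ≤ l3 * κ := mul_le_mul_of_nonneg_right o4 hκ.le
  have q5 : l3 * κ < u3 * κ := mul_lt_mul_of_pos_right o5 hκ
  have hu1n : 0 ≤ u1 := by linarith
  have hl2n : 0 ≤ l2 := by linarith
  have hu2n : 0 ≤ u2 := by linarith
  have hl3n : 0 ≤ l3 := by linarith
  have hu3n : 0 ≤ u3 := by linarith
  rw [Fin.sum_univ_three]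
  rcases pin3 q1 q2 q3 q4 q5 e1 e2 e3 e4 e5 e6 with
    ⟨⟨a1,a2⟩,⟨b1,b2⟩,⟨c1'',c2''⟩⟩ | ⟨⟨a1,a2⟩,⟨b1,b2⟩,⟨c1'',c2''⟩⟩ | ⟨⟨a1,a2⟩,⟨b1,b2⟩,⟨c1'',c2''⟩⟩ |
    ⟨⟨a1,a2⟩,⟨b1,b2⟩,⟨c1'',c2''⟩⟩ | ⟨⟨a1,a2⟩,⟨b1,b2⟩,⟨c1'',c2''⟩⟩ | ⟨⟨a1,a2⟩,⟨b1,b2⟩,⟨c1'',c2''⟩⟩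
  · have B1 := bnd_up (hnn 0) hκ (le_of_lt a2) hκ34 hu1n hs1 hK c1
    have B2 := bnd_up (hnn 1) hκ (le_of_lt b2) hκ34 hu2n hs2 hK c2
    have B3 := bnd_up (hnn 2) hκ (le_of_lt c2'') hκ34 hu3n hs3 hK c3
    have L1 := bnd_lo (μ := (Matrix.isHermitian_conjTranspose_mul_self M).eigenvalues 0)
      hκ o0 (le_of_lt a1) hκ34 ht1 hK c1'
    have L2 := bnd_lo (μ := (Matrix.isHermitian_conjTranspose_mul_self M).eigenvalues 1)
      hκ hl2n (le_of_lt b1) hκ34 ht2 hK c2'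
    have L3 := bnd_lo (μ := (Matrix.isHermitian_conjTranspose_mul_self M).eigenvalues 2)
      hκ hl3n (le_of_lt c1'') hκ34 ht3 hK c3'
    constructor <;> [linarith [L1,L2,L3]; linarith [B1,B2,B3]]
  · have B1 := bnd_up (hnn 0) hκ (le_of_lt a2) hκ34 hu1n hs1 hK c1
    have B2 := bnd_up (hnn 2) hκ (le_of_lt b2) hκ34 hu2n hs2 hK c2
    have B3 := bnd_up (hnn 1) hκ (le_of_lt c2'') hκ34 hu3n hs3 hK c3
    have L1 := bnd_lo (μ := (Matrix.isHermitian_conjTranspose_mul_self M).eigenvalues 0)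
      hκ o0 (le_of_lt a1) hκ34 ht1 hK c1'
    have L2 := bnd_lo (μ := (Matrix.isHermitian_conjTranspose_mul_self M).eigenvalues 2)
      hκ hl2n (le_of_lt b1) hκ34 ht2 hK c2'
    have L3 := bnd_lo (μ := (Matrix.isHermitian_conjTranspose_mul_self M).eigenvalues 1)
      hκ hl3n (le_of_lt c1'') hκ34 ht3 hK c3'
    constructor <;> [linarith [L1,L2,L3]; linarith [B1,B2,B3]]
  · have B1 := bnd_up (hnn 1) hκ (le_of_lt a2) hκ34 hu1n hs1 hK c1
    have B2 := bnd_up (hnn 0) hκ (le_of_lt b2) hκ34 hu2n hs2 hK c2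
    have B3 := bnd_up (hnn 2) hκ (le_of_lt c2'') hκ34 hu3n hs3 hK c3
    have L1 := bnd_lo (μ := (Matrix.isHermitian_conjTranspose_mul_self M).eigenvalues 1)
      hκ o0 (le_of_lt a1) hκ34 ht1 hK c1'
    have L2 := bnd_lo (μ := (Matrix.isHermitian_conjTranspose_mul_self M).eigenvalues 0)
      hκ hl2n (le_of_lt b1) hκ34 ht2 hK c2'
    have L3 := bnd_lo (μ := (Matrix.isHermitian_conjTranspose_mul_self M).eigenvalues 2)
      hκ hl3n (le_of_lt c1'') hκ34 ht3 hK c3'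
    constructor <;> [linarith [L1,L2,L3]; linarith [B1,B2,B3]]
  · have B1 := bnd_up (hnn 1) hκ (le_of_lt a2) hκ34 hu1n hs1 hK c1
    have B2 := bnd_up (hnn 2) hκ (le_of_lt b2) hκ34 hu2n hs2 hK c2
    have B3 := bnd_up (hnn 0) hκ (le_of_lt c2'') hκ34 hu3n hs3 hK c3
    have L1 := bnd_lo (μ := (Matrix.isHermitian_conjTranspose_mul_self M).eigenvalues 1)
      hκ o0 (le_of_lt a1) hκ34 ht1 hK c1'
    have L2 := bnd_lo (μ := (Matrix.isHermitian_conjTranspose_mul_self M).eigenvalues 2)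
      hκ hl2n (le_of_lt b1) hκ34 ht2 hK c2'
    have L3 := bnd_lo (μ := (Matrix.isHermitian_conjTranspose_mul_self M).eigenvalues 0)
      hκ hl3n (le_of_lt c1'') hκ34 ht3 hK c3'
    constructor <;> [linarith [L1,L2,L3]; linarith [B1,B2,B3]]
  · have B1 := bnd_up (hnn 2) hκ (le_of_lt a2) hκ34 hu1n hs1 hK c1
    have B2 := bnd_up (hnn 0) hκ (le_of_lt b2) hκ34 hu2n hs2 hK c2
    have B3 := bnd_up (hnn 1) hκ (le_of_lt c2'') hκ34 hu3n hs3 hK c3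
    have L1 := bnd_lo (μ := (Matrix.isHermitian_conjTranspose_mul_self M).eigenvalues 2)
      hκ o0 (le_of_lt a1) hκ34 ht1 hK c1'
    have L2 := bnd_lo (μ := (Matrix.isHermitian_conjTranspose_mul_self M).eigenvalues 0)
      hκ hl2n (le_of_lt b1) hκ34 ht2 hK c2'
    have L3 := bnd_lo (μ := (Matrix.isHermitian_conjTranspose_mul_self M).eigenvalues 1)
      hκ hl3n (le_of_lt c1'') hκ34 ht3 hK c3'
    constructor <;> [linarith [L1,L2,L3]; linarith [B1,B2,B3]]
  · have B1 := bnd_up (hnn 2) hκ (le_of_lt a2) hκ34 hu1n hs1 hK c1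
    have B2 := bnd_up (hnn 1) hκ (le_of_lt b2) hκ34 hu2n hs2 hK c2
    have B3 := bnd_up (hnn 0) hκ (le_of_lt c2'') hκ34 hu3n hs3 hK c3
    have L1 := bnd_lo (μ := (Matrix.isHermitian_conjTranspose_mul_self M).eigenvalues 2)
      hκ o0 (le_of_lt a1) hκ34 ht1 hK c1'
    have L2 := bnd_lo (μ := (Matrix.isHermitian_conjTranspose_mul_self M).eigenvalues 1)
      hκ hl2n (le_of_lt b1) hκ34 ht2 hK c2'
    have L3 := bnd_lo (μ := (Matrix.isHermitian_conjTranspose_mul_self M).eigenvalues 0)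
      hκ hl3n (le_of_lt c1'') hκ34 ht3 hK c3'
    constructor <;> [linarith [L1,L2,L3]; linarith [B1,B2,B3]]

lemma gFun_eq_sum (B M : Matrix (Fin 3) (Fin 3) ℝ)
    (hM : (Matrix.of fun i j => B i j ^ ((1:ℝ) / (3/2))) = M) :
    gFun (3/2) B = ∑ i, ((Matrix.isHermitian_conjTranspose_mul_self M).eigenvalues i) ^ ((3:ℝ)/4) := by
  unfold gFun schattenR
  rw [hM]
  rw [show ((3:ℝ)/2/2) = 3/4 from by norm_num, show ((1:ℝ)/(3/2)) = 2/3 from by norm_num]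
  have hnn : ∀ i, (0:ℝ) ≤ (Matrix.isHermitian_conjTranspose_mul_self M).eigenvalues i := fun i =>
    (Matrix.posSemidef_conjTranspose_mul_self _).eigenvalues_nonneg i
  have hS : (0:ℝ) ≤ ∑ i, (Matrix.isHermitian_conjTranspose_mul_self M).eigenvalues i ^ ((3:ℝ)/4) :=
    Finset.sum_nonneg fun i _ => Real.rpow_nonneg (hnn i) _
  rw [← Real.rpow_mul hS]
  norm_num

lemma smul_one_fin3 (q : ℝ) : q • (1 : Matrix (Fin 3) (Fin 3) ℝ) = !![q,0,0;0,q,0;0,0,q] := by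
  ext i j
  fin_cases i <;> fin_cases j <;>
    simp [Matrix.smul_apply, Matrix.one_apply, Matrix.vecHead, Matrix.vecTail]

noncomputable def cA : ℝ := (2:ℝ) ^ ((2:ℝ)/3)
noncomputable def cC : ℝ := (9:ℝ) ^ ((2:ℝ)/3)

lemma cA_pos : 0 < cA := Real.rpow_pos_of_pos (by norm_num) _
lemma cC_pos : 0 < cC := Real.rpow_pos_of_pos (by norm_num) _

lemma cube_rpow23 {k : ℝ} (hk : 0 ≤ k) : (k ^ (3:ℕ)) ^ ((2:ℝ)/3) = k ^ (2:ℕ) := by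
  rw [← Real.rpow_natCast k 3, ← Real.rpow_mul hk]
  norm_num

lemma entry_rpow23 {v k : ℝ} (hv : 0 ≤ v) (hk : 0 ≤ k) : (v * k ^ (3:ℕ)) ^ ((2:ℝ)/3)
    = v ^ ((2:ℝ)/3) * k ^ (2:ℕ) := by
  rw [Real.mul_rpow hv (by positivity), cube_rpow23 hk]

lemma e0 : (0:ℝ) ^ ((2:ℝ)/3) = 0 := by
  rw [Real.zero_rpow]; norm_num
lemma e2' : (2:ℝ) ^ ((2:ℝ)/3) = cA := rfl
lemma e16 : (16:ℝ) ^ ((2:ℝ)/3) = 4 * cA := by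
  rw [show (16:ℝ) = 2 * 2 ^ (3:ℕ) from by norm_num, entry_rpow23 (by norm_num) (by norm_num), cA]
  ring
lemma e128 : (128:ℝ) ^ ((2:ℝ)/3) = 16 * cA := by
  rw [show (128:ℝ) = 2 * 4 ^ (3:ℕ) from by norm_num, entry_rpow23 (by norm_num) (by norm_num), cA]
  ring
lemma e9 : (9:ℝ) ^ ((2:ℝ)/3) = cC := rfl
lemma e72 : (72:ℝ) ^ ((2:ℝ)/3) = 4 * cC := by
  rw [show (72:ℝ) = 9 * 2 ^ (3:ℕ) from by norm_num, entry_rpow23 (by norm_num) (by norm_num), cC]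
  ring

lemma kappaA34 : (cA^2) ^ ((3:ℝ)/4) = 2 := by
  rw [cA, ← Real.rpow_natCast ((2:ℝ)^((2:ℝ)/3)) 2, ← Real.rpow_mul (by norm_num : (0:ℝ) ≤ 2),
    ← Real.rpow_mul (by norm_num : (0:ℝ) ≤ 2)]
  norm_num
lemma kappaC34 : (cC^2) ^ ((3:ℝ)/4) = 9 := by
  rw [cC, ← Real.rpow_natCast ((9:ℝ)^((2:ℝ)/3)) 2, ← Real.rpow_mul (by norm_num : (0:ℝ) ≤ 9),
    ← Real.rpow_mul (by norm_num : (0:ℝ) ≤ 9)]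
  norm_num

lemma hMA : (Matrix.of fun i j => (!![0,2,16;2,16,0;16,0,128] : Matrix (Fin 3) (Fin 3) ℝ) i j
    ^ ((1:ℝ) / (3/2))) = cA • !![0,1,4;1,4,0;4,0,16] := by
  rw [show ((1:ℝ)/(3/2)) = 2/3 from by norm_num]
  ext i j
  fin_cases i <;> fin_cases j <;>
    simp [Matrix.smul_apply, Matrix.vecHead, Matrix.vecTail, e0, e2', e16, e128] <;> ring_nf

lemma hMB : (Matrix.of fun i j => (!![0,16,2;16,128,0;2,0,16] : Matrix (Fin 3) (Fin 3) ℝ) i j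
    ^ ((1:ℝ) / (3/2))) = cA • !![0,4,1;4,16,0;1,0,4] := by
  rw [show ((1:ℝ)/(3/2)) = 2/3 from by norm_num]
  ext i j
  fin_cases i <;> fin_cases j <;>
    simp [Matrix.smul_apply, Matrix.vecHead, Matrix.vecTail, e0, e2', e16, e128] <;> ring_nf

lemma hMC : (Matrix.of fun i j => (!![0,9,9;9,72,0;9,0,72] : Matrix (Fin 3) (Fin 3) ℝ) i j
    ^ ((1:ℝ) / (3/2))) = cC • !![0,1,1;1,4,0;1,0,4] := by
  rw [show ((1:ℝ)/(3/2)) = 2/3 from by norm_num]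
  ext i j
  fin_cases i <;> fin_cases j <;>
    simp [Matrix.smul_apply, Matrix.vecHead, Matrix.vecTail, e0, e9, e72] <;> ring_nf

lemma gramGen (c : ℝ) (N G : Matrix (Fin 3) (Fin 3) ℝ) (hsym : Nᴴ = N) (hNG : N * N = G) :
    (c • N)ᴴ * (c • N) = (c^2) • G := by
  rw [conjTranspose_smul, hsym, Matrix.smul_mul, Matrix.mul_smul, smul_smul, hNG,
    star_trivial, sq]

lemma hGramA : ((cA • !![0,1,4;1,4,0;4,0,16] : Matrix (Fin 3) (Fin 3) ℝ))ᴴ *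
    (cA • !![0,1,4;1,4,0;4,0,16]) = (cA^2) • !![17,4,64;4,17,4;64,4,272] := by
  refine gramGen _ _ _ ?_ ?_
  · ext i j; fin_cases i <;> fin_cases j <;> simp [Matrix.conjTranspose_apply, Matrix.vecHead, Matrix.vecTail]
  · ext i j
    fin_cases i <;> fin_cases j <;>
      simp [Matrix.mul_apply, Fin.sum_univ_three, Matrix.vecHead, Matrix.vecTail] <;> norm_num

lemma hGramB : ((cA • !![0,4,1;4,16,0;1,0,4] : Matrix (Fin 3) (Fin 3) ℝ))ᴴ *
    (cA • !![0,4,1;4,16,0;1,0,4]) = (cA^2) • !![17,64,4;64,272,4;4,4,17] := by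
  refine gramGen _ _ _ ?_ ?_
  · ext i j; fin_cases i <;> fin_cases j <;> simp [Matrix.conjTranspose_apply, Matrix.vecHead, Matrix.vecTail]
  · ext i j
    fin_cases i <;> fin_cases j <;>
      simp [Matrix.mul_apply, Fin.sum_univ_three, Matrix.vecHead, Matrix.vecTail] <;> norm_num

lemma hGramC : ((cC • !![0,1,1;1,4,0;1,0,4] : Matrix (Fin 3) (Fin 3) ℝ))ᴴ *
    (cC • !![0,1,1;1,4,0;1,0,4]) = (cC^2) • !![2,4,4;4,17,1;4,1,17] := by
  refine gramGen _ _ _ ?_ ?_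
  · ext i j; fin_cases i <;> fin_cases j <;> simp [Matrix.conjTranspose_apply, Matrix.vecHead, Matrix.vecTail]
  · ext i j
    fin_cases i <;> fin_cases j <;>
      simp [Matrix.mul_apply, Fin.sum_univ_three, Matrix.vecHead, Matrix.vecTail] <;> norm_num

lemma dPl1 : det (((1274761/1000000:ℝ)) • (1 : Matrix (Fin 3) (Fin 3) ℝ) - !![17,4,64;4,17,4;64,4,272]) < 0 := by
  rw [smul_one_fin3]
  norm_num [Matrix.det_fin_three, Matrix.sub_apply, Matrix.vecHead, Matrix.vecTail, Matrix.cons_val_two, Matrix.cons_val_one, Matrix.cons_val_zero]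
lemma dPu1 : 0 < det (((637381/500000:ℝ)) • (1 : Matrix (Fin 3) (Fin 3) ℝ) - !![17,4,64;4,17,4;64,4,272]) := by
  rw [smul_one_fin3]
  norm_num [Matrix.det_fin_three, Matrix.sub_apply, Matrix.vecHead, Matrix.vecTail, Matrix.cons_val_two, Matrix.cons_val_one, Matrix.cons_val_zero]
lemma dPl2 : 0 < det (((17478151/1000000:ℝ)) • (1 : Matrix (Fin 3) (Fin 3) ℝ) - !![17,4,64;4,17,4;64,4,272]) := by
  rw [smul_one_fin3]
  norm_num [Matrix.det_fin_three, Matrix.sub_apply, Matrix.vecHead, Matrix.vecTail, Matrix.cons_val_two, Matrix.cons_val_one, Matrix.cons_val_zero]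
lemma dPu2 : det (((2184769/125000:ℝ)) • (1 : Matrix (Fin 3) (Fin 3) ℝ) - !![17,4,64;4,17,4;64,4,272]) < 0 := by
  rw [smul_one_fin3]
  norm_num [Matrix.det_fin_three, Matrix.sub_apply, Matrix.vecHead, Matrix.vecTail, Matrix.cons_val_two, Matrix.cons_val_one, Matrix.cons_val_zero]
lemma dPl3 : det (((287247087/1000000:ℝ)) • (1 : Matrix (Fin 3) (Fin 3) ℝ) - !![17,4,64;4,17,4;64,4,272]) < 0 := by
  rw [smul_one_fin3]
  norm_num [Matrix.det_fin_three, Matrix.sub_apply, Matrix.vecHead, Matrix.vecTail, Matrix.cons_val_two, Matrix.cons_val_one, Matrix.cons_val_zero]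
lemma dPu3 : 0 < det (((17952943/62500:ℝ)) • (1 : Matrix (Fin 3) (Fin 3) ℝ) - !![17,4,64;4,17,4;64,4,272]) := by
  rw [smul_one_fin3]
  norm_num [Matrix.det_fin_three, Matrix.sub_apply, Matrix.vecHead, Matrix.vecTail, Matrix.cons_val_two, Matrix.cons_val_one, Matrix.cons_val_zero]
lemma dQl1 : det (((1274761/1000000:ℝ)) • (1 : Matrix (Fin 3) (Fin 3) ℝ) - !![17,64,4;64,272,4;4,4,17]) < 0 := by
  rw [smul_one_fin3]
  norm_num [Matrix.det_fin_three, Matrix.sub_apply, Matrix.vecHead, Matrix.vecTail, Matrix.cons_val_two, Matrix.cons_val_one, Matrix.cons_val_zero]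
lemma dQu1 : 0 < det (((637381/500000:ℝ)) • (1 : Matrix (Fin 3) (Fin 3) ℝ) - !![17,64,4;64,272,4;4,4,17]) := by
  rw [smul_one_fin3]
  norm_num [Matrix.det_fin_three, Matrix.sub_apply, Matrix.vecHead, Matrix.vecTail, Matrix.cons_val_two, Matrix.cons_val_one, Matrix.cons_val_zero]
lemma dQl2 : 0 < det (((17478151/1000000:ℝ)) • (1 : Matrix (Fin 3) (Fin 3) ℝ) - !![17,64,4;64,272,4;4,4,17]) := by
  rw [smul_one_fin3]
  norm_num [Matrix.det_fin_three, Matrix.sub_apply, Matrix.vecHead, Matrix.vecTail, Matrix.cons_val_two, Matrix.cons_val_one, Matrix.cons_val_zero]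
lemma dQu2 : det (((2184769/125000:ℝ)) • (1 : Matrix (Fin 3) (Fin 3) ℝ) - !![17,64,4;64,272,4;4,4,17]) < 0 := by
  rw [smul_one_fin3]
  norm_num [Matrix.det_fin_three, Matrix.sub_apply, Matrix.vecHead, Matrix.vecTail, Matrix.cons_val_two, Matrix.cons_val_one, Matrix.cons_val_zero]
lemma dQl3 : det (((287247087/1000000:ℝ)) • (1 : Matrix (Fin 3) (Fin 3) ℝ) - !![17,64,4;64,272,4;4,4,17]) < 0 := by
  rw [smul_one_fin3]
  norm_num [Matrix.det_fin_three, Matrix.sub_apply, Matrix.vecHead, Matrix.vecTail, Matrix.cons_val_two, Matrix.cons_val_one, Matrix.cons_val_zero]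
lemma dQu3 : 0 < det (((17952943/62500:ℝ)) • (1 : Matrix (Fin 3) (Fin 3) ℝ) - !![17,64,4;64,272,4;4,4,17]) := by
  rw [smul_one_fin3]
  norm_num [Matrix.det_fin_three, Matrix.sub_apply, Matrix.vecHead, Matrix.vecTail, Matrix.cons_val_two, Matrix.cons_val_one, Matrix.cons_val_zero]
lemma dRl1 : det (((202041/1000000:ℝ)) • (1 : Matrix (Fin 3) (Fin 3) ℝ) - !![2,4,4;4,17,1;4,1,17]) < 0 := by
  rw [smul_one_fin3]
  norm_num [Matrix.det_fin_three, Matrix.sub_apply, Matrix.vecHead, Matrix.vecTail, Matrix.cons_val_two, Matrix.cons_val_one, Matrix.cons_val_zero]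
lemma dRu1 : 0 < det (((101021/500000:ℝ)) • (1 : Matrix (Fin 3) (Fin 3) ℝ) - !![2,4,4;4,17,1;4,1,17]) := by
  rw [smul_one_fin3]
  norm_num [Matrix.det_fin_three, Matrix.sub_apply, Matrix.vecHead, Matrix.vecTail, Matrix.cons_val_two, Matrix.cons_val_one, Matrix.cons_val_zero]
lemma dRl2 : 0 < det (((15999999/1000000:ℝ)) • (1 : Matrix (Fin 3) (Fin 3) ℝ) - !![2,4,4;4,17,1;4,1,17]) := by
  rw [smul_one_fin3]
  norm_num [Matrix.det_fin_three, Matrix.sub_apply, Matrix.vecHead, Matrix.vecTail, Matrix.cons_val_two, Matrix.cons_val_one, Matrix.cons_val_zero]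
lemma dRu2 : det (((16000001/1000000:ℝ)) • (1 : Matrix (Fin 3) (Fin 3) ℝ) - !![2,4,4;4,17,1;4,1,17]) < 0 := by
  rw [smul_one_fin3]
  norm_num [Matrix.det_fin_three, Matrix.sub_apply, Matrix.vecHead, Matrix.vecTail, Matrix.cons_val_two, Matrix.cons_val_one, Matrix.cons_val_zero]
lemma dRl3 : det (((9898979/500000:ℝ)) • (1 : Matrix (Fin 3) (Fin 3) ℝ) - !![2,4,4;4,17,1;4,1,17]) < 0 := by
  rw [smul_one_fin3]
  norm_num [Matrix.det_fin_three, Matrix.sub_apply, Matrix.vecHead, Matrix.vecTail, Matrix.cons_val_two, Matrix.cons_val_one, Matrix.cons_val_zero]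
lemma dRu3 : 0 < det (((19797959/1000000:ℝ)) • (1 : Matrix (Fin 3) (Fin 3) ℝ) - !![2,4,4;4,17,1;4,1,17]) := by
  rw [smul_one_fin3]
  norm_num [Matrix.det_fin_three, Matrix.sub_apply, Matrix.vecHead, Matrix.vecTail, Matrix.cons_val_two, Matrix.cons_val_one, Matrix.cons_val_zero]

lemma gA_le : gFun (3/2) (!![0,2,16;2,16,0;16,0,128] : Matrix (Fin 3) (Fin 3) ℝ)
    ≤ 2 * (599849/500000 + 8548141/1000000 + 1090214/15625) := by
  rw [gFun_eq_sum _ _ hMA]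
  have h := sumBounds ((cA) • !![0,1,4;1,4,0;4,0,16]) (pow_pos cA_pos 2) (by norm_num) kappaA34 !![17,4,64;4,17,4;64,4,272] hGramA
    (by norm_num) (by norm_num) (by norm_num) (by norm_num) (by norm_num) (by norm_num)
    dPl1 dPu1 dPl2 dPu2 dPl3 dPu3
    (by norm_num) (by norm_num) (by norm_num) (by norm_num) (by norm_num) (by norm_num)
    (by norm_num) (by norm_num) (by norm_num) (by norm_num) (by norm_num) (by norm_num)
    (l1 := 1274761/1000000) (u1 := 637381/500000) (l2 := 17478151/1000000) (u2 := 2184769/125000)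
    (l3 := 287247087/1000000) (u3 := 17952943/62500) (s1 := 599849/500000) (s2 := 8548141/1000000)
    (s3 := 1090214/15625) (t1 := 0) (t2 := 0) (t3 := 0)
  exact h.2

lemma gB_le : gFun (3/2) (!![0,16,2;16,128,0;2,0,16] : Matrix (Fin 3) (Fin 3) ℝ)
    ≤ 2 * (599849/500000 + 8548141/1000000 + 1090214/15625) := by
  rw [gFun_eq_sum _ _ hMB]
  have h := sumBounds ((cA) • !![0,4,1;4,16,0;1,0,4]) (pow_pos cA_pos 2) (by norm_num) kappaA34 !![17,64,4;64,272,4;4,4,17] hGramB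
    (by norm_num) (by norm_num) (by norm_num) (by norm_num) (by norm_num) (by norm_num)
    dQl1 dQu1 dQl2 dQu2 dQl3 dQu3
    (by norm_num) (by norm_num) (by norm_num) (by norm_num) (by norm_num) (by norm_num)
    (by norm_num) (by norm_num) (by norm_num) (by norm_num) (by norm_num) (by norm_num)
    (l1 := 1274761/1000000) (u1 := 637381/500000) (l2 := 17478151/1000000) (u2 := 2184769/125000)
    (l3 := 287247087/1000000) (u3 := 17952943/62500) (s1 := 599849/500000) (s2 := 8548141/1000000)
    (s3 := 1090214/15625) (t1 := 0) (t2 := 0) (t3 := 0)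
  exact h.2

lemma gC_ge : (9 : ℝ) * (60271/200000 + 7999999/1000000 + 938567/100000)
    ≤ gFun (3/2) (!![0,9,9;9,72,0;9,0,72] : Matrix (Fin 3) (Fin 3) ℝ) := by
  rw [gFun_eq_sum _ _ hMC]
  have h := sumBounds ((cC) • !![0,1,1;1,4,0;1,0,4]) (pow_pos cC_pos 2) (by norm_num) kappaC34 !![2,4,4;4,17,1;4,1,17] hGramC
    (by norm_num) (by norm_num) (by norm_num) (by norm_num) (by norm_num) (by norm_num)
    dRl1 dRu1 dRl2 dRu2 dRl3 dRu3
    (by norm_num) (by norm_num) (by norm_num) (by norm_num) (by norm_num) (by norm_num)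
    (by norm_num) (by norm_num) (by norm_num) (by norm_num) (by norm_num) (by norm_num)
    (l1 := 202041/1000000) (u1 := 101021/500000) (l2 := 15999999/1000000) (u2 := 16000001/1000000)
    (l3 := 9898979/500000) (u3 := 19797959/1000000) (s1 := 100) (s2 := 100)
    (s3 := 100) (t1 := 60271/200000) (t2 := 7999999/1000000) (t3 := 938567/100000)
  exact h.1

/-- the map `B ↦ ‖B^{∘1/p}‖_p^p` is NOT convex on the 3×3 entrywise-nonnegative
matrices for `p = 3/2` (counterexample arising from the boundary behaviour of the polar power
of `C_ε = [[ε,1,ε],[1,ε,1],[ε,1,1]]` as `ε → 0⁺`). -/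
theorem stmt12 :
    ¬ ∀ (A B : Matrix (Fin 3) (Fin 3) ℝ),
        (∀ i j, 0 ≤ A i j) → (∀ i j, 0 ≤ B i j) →
        ∀ t : ℝ, 0 ≤ t → t ≤ 1 →
          gFun (3 / 2) (t • A + (1 - t) • B) ≤
            t * gFun (3 / 2) A + (1 - t) * gFun (3 / 2) B := by
  intro h
  have hA : ∀ i j, (0:ℝ) ≤ (!![0,2,16;2,16,0;16,0,128] : Matrix (Fin 3) (Fin 3) ℝ) i j := by
    intro i j; fin_cases i <;> fin_cases j <;> norm_num
  have hB : ∀ i j, (0:ℝ) ≤ (!![0,16,2;16,128,0;2,0,16] : Matrix (Fin 3) (Fin 3) ℝ) i j := by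
    intro i j; fin_cases i <;> fin_cases j <;> norm_num
  have key := h _ _ hA hB (1/2) (by norm_num) (by norm_num)
  have hC : ((1/2 : ℝ)) • (!![0,2,16;2,16,0;16,0,128] : Matrix (Fin 3) (Fin 3) ℝ)
      + ((1 - 1/2 : ℝ)) • (!![0,16,2;16,128,0;2,0,16] : Matrix (Fin 3) (Fin 3) ℝ)
      = !![0,9,9;9,72,0;9,0,72] := by
    ext i j
    fin_cases i <;> fin_cases j <;>
      norm_num [Matrix.add_apply, Matrix.smul_apply]
  rw [hC] at key
  have h1 := gA_le
  have h2 := gB_le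
  have h3 := gC_ge
  norm_num at key h1 h2 h3
  linarith
end

section
/- Let C be a 2×N real matrix with nonnegative entries and 1 ≤ p ≤ 2, and define the polar power C^{[p−1]} = (CC^T)^{(p−2)/2} C (assuming CC^T invertible). If an entry C_{ij} = 0, then the corresponding entry (C^{[p−1]})_{ij} is nonpositive. -/
/-!
`matRpow A r` is the continuous functional calculus `cfc (· ^ r) A`. A `2 × 2` Hermitian matrix
has at most two eigenvalues `μ₀, μ₁`, so any `f` agrees on its spectrum with its secant line
through `(μ₀, f μ₀)` and `(μ₁, f μ₁)`, whence `f(A) = β A + α I` with `β` the slope of `f`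
between `μ₀` and `μ₁`. For `A = CCᵀ ≻ 0` and `f = (·) ^ ((p - 2) / 2)`, antitone on `(0, ∞)`,
`β ≤ 0`; hence `(f(A) C)ᵢⱼ = β (CCᵀC)ᵢⱼ + α Cᵢⱼ = β (CCᵀC)ᵢⱼ ≤ 0` when `Cᵢⱼ = 0`, since
`CCᵀC` is entrywise nonnegative.
-/

open Matrix

open scoped Classical in
/-- The `r`-th power `M^r` of a Hermitian real matrix, via the spectral decomposition. -/
noncomputable def matRpow {n : Type*} [Fintype n] [DecidableEq n]
    (M : Matrix n n ℝ) (r : ℝ) : Matrix n n ℝ :=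
  if h : M.IsHermitian then
    (h.eigenvectorUnitary : Matrix n n ℝ) *
      Matrix.diagonal (fun i => h.eigenvalues i ^ r) *
        (h.eigenvectorUnitary : Matrix n n ℝ)ᴴ
  else 0

lemma Matrix.IsHermitian.matRpow_eq_cfc {n : Type*} [Fintype n] [DecidableEq n]
    {A : Matrix n n ℝ} (hA : A.IsHermitian) (r : ℝ) :
    matRpow A r = cfc (fun x : ℝ ↦ x ^ r) A := by
  rw [matRpow, dif_pos hA, hA.cfc_eq, IsHermitian.cfc, Unitary.conjStarAlgAut_apply,
    star_eq_conjTranspose]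
  rfl

lemma Matrix.IsHermitian.cfc_eq_slope_smul_add {A : Matrix (Fin 2) (Fin 2) ℝ}
    (hA : A.IsHermitian) (f : ℝ → ℝ) :
    cfc f A = slope f (hA.eigenvalues 0) (hA.eigenvalues 1) • A +
      algebraMap ℝ _ (f (hA.eigenvalues 0) -
        slope f (hA.eigenvalues 0) (hA.eigenvalues 1) * hA.eigenvalues 0) := by
  set a := hA.eigenvalues 0
  set b := hA.eigenvalues 1
  have hf : (spectrum ℝ A).EqOn f (fun x ↦ slope f a b * x + (f a - slope f a b * a)) := by
    rw [hA.spectrum_real_eq_range_eigenvalues]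
    rintro - ⟨k, rfl⟩
    fin_cases k
    · simp [a]
    · have hb : (b - a) * slope f a b + f a = f b := sub_smul_slope_vadd f a b
      simp only [Fin.mk_one, Fin.isValue]
      linarith
  rw [cfc_congr hf, cfc_add_const _ _ A, cfc_const_mul_id _ A]

lemma Matrix.mul_apply_nonneg {l m n R : Type*} [Fintype m] [Semiring R] [PartialOrder R]
    [IsOrderedRing R] {A : Matrix l m R} {B : Matrix m n R} (hA : ∀ i j, 0 ≤ A i j)
    (hB : ∀ i j, 0 ≤ B i j) (i : l) (k : n) : 0 ≤ (A * B) i k :=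
  Finset.sum_nonneg fun j _ ↦ mul_nonneg (hA i j) (hB j k)

theorem stmt14_general (N : ℕ) (C : Matrix (Fin 2) (Fin N) ℝ) (hC : ∀ i j, 0 ≤ C i j)
    (p : ℝ) (hp2 : p ≤ 2)
    (hpd : (C * Cᴴ).PosDef)
    (i : Fin 2) (j : Fin N) (hij : C i j = 0) :
    (matRpow (C * Cᴴ) ((p - 2) / 2) * C) i j ≤ 0 := by
  have hA := hpd.isHermitian
  have hslope : slope (· ^ ((p - 2) / 2)) (hA.eigenvalues 0) (hA.eigenvalues 1) ≤ 0 :=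
    (Real.antitoneOn_rpow_Ioi_of_exponent_nonpos (by linarith)).slope_nonpos
      (hpd.eigenvalues_pos 0) (hpd.eigenvalues_pos 1)
  have hCCC : 0 ≤ (C * Cᴴ * C) i j :=
    mul_apply_nonneg (mul_apply_nonneg hC (fun k l ↦ hC l k)) hC i j
  rw [hA.matRpow_eq_cfc, hA.cfc_eq_slope_smul_add, Algebra.algebraMap_eq_smul_one, Matrix.add_mul,
    Matrix.smul_mul, Matrix.smul_mul, Matrix.one_mul]
  simp only [Matrix.add_apply, Matrix.smul_apply, smul_eq_mul, hij, mul_zero, add_zero]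
  exact mul_nonpos_of_nonpos_of_nonneg hslope hCCC

/-- for a 2×N entrywise-nonnegative real matrix `C` with `CCᵀ` positive
definite and `1 ≤ p ≤ 2`, a zero entry `C_{ij} = 0` forces the corresponding entry of the
polar power `C^{[p−1]} = (CCᵀ)^{(p−2)/2} C` to be nonpositive. -/
theorem stmt14 (N : ℕ) (C : Matrix (Fin 2) (Fin N) ℝ) (hC : ∀ i j, 0 ≤ C i j)
    (p : ℝ) (hp1 : 1 ≤ p) (hp2 : p ≤ 2)
    (hpd : (C * Cᴴ).PosDef)
    (i : Fin 2) (j : Fin N) (hij : C i j = 0) :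
    (matRpow (C * Cᴴ) ((p - 2) / 2) * C) i j ≤ 0 :=
  stmt14_general N C hC p hp2 hpd i j hij
end

section
/- The conjectured norm compression inequality fails for 4×4 matrices of scalars: for the positive semidefinite matrix A = [[3,0,−2,−2],[0,3,2,−1],[−2,2,4,0],[−2,−1,0,3]] and p = 3/2, one has ‖A‖_{3/2} < ‖[|A_{ij}|]‖_{3/2}, i.e. the Schatten 3/2-norm of A is strictly less than that of its entrywise absolute value. -/
open Matrix

theorem trace_eq_sum_eig' {n : Type*} [Fintype n] [DecidableEq n] {M : Matrix n n ℝ}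
    (hM : M.IsHermitian) : M.trace = ∑ i, hM.eigenvalues i := by
  have h := hM.spectral_theorem
  rw [hM.trace_eq_sum_eigenvalues]
  simp

theorem rootA' (M : Matrix (Fin 4) (Fin 4) ℝ) (hM : M.IsHermitian)
    (hMe : M = !![(17:ℝ), -2, -14, -12; -2, 14, 14, -6; -14, 14, 24, 2; -12, -6, 2, 14])
    (i : Fin 4) :
    (hM.eigenvalues i)^4 - 69*(hM.eigenvalues i)^3 + 1172*(hM.eigenvalues i)^2
      - 1504*(hM.eigenvalues i) + 144 = 0 := by
  set x := hM.eigenvalues i with hx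
  have hs := hM.eigenvalues_mem_spectrum_real i
  rw [spectrum.mem_iff, Matrix.isUnit_iff_isUnit_det, isUnit_iff_ne_zero, not_not] at hs
  have hmat : algebraMap ℝ (Matrix (Fin 4) (Fin 4) ℝ) x - M
      = !![x-17, 2, 14, 12; 2, x-14, -14, 6; 14, -14, x-24, -2; 12, 6, -2, x-14] := by
    subst hMe
    ext i j
    fin_cases i <;> fin_cases j <;> simp [Matrix.algebraMap_matrix_apply]
  rw [hmat] at hs
  rw [show Matrix.det (!![x-17, 2, 14, 12; 2, x-14, -14, 6; 14, -14, x-24, -2; 12, 6, -2, x-14])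
      = x^4 - 69*x^3 + 1172*x^2 - 1504*x + 144 by
    simp [Matrix.det_succ_row_zero, Fin.sum_univ_succ, Fin.succAbove]
    ring] at hs
  exact hs

theorem rootB' (M : Matrix (Fin 4) (Fin 4) ℝ) (hM : M.IsHermitian)
    (hMe : M = !![(17:ℝ), 6, 14, 12; 6, 14, 14, 6; 14, 14, 24, 6; 12, 6, 6, 14])
    (i : Fin 4) :
    (hM.eigenvalues i)^4 - 69*(hM.eigenvalues i)^3 + 1108*(hM.eigenvalues i)^2
      - 4704*(hM.eigenvalues i) + 400 = 0 := by
  set x := hM.eigenvalues i with hx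
  have hs := hM.eigenvalues_mem_spectrum_real i
  rw [spectrum.mem_iff, Matrix.isUnit_iff_isUnit_det, isUnit_iff_ne_zero, not_not] at hs
  have hmat : algebraMap ℝ (Matrix (Fin 4) (Fin 4) ℝ) x - M
      = !![x-17, -6, -14, -12; -6, x-14, -14, -6; -14, -14, x-24, -6; -12, -6, -6, x-14] := by
    subst hMe
    ext i j
    fin_cases i <;> fin_cases j <;> simp [Matrix.algebraMap_matrix_apply]
  rw [hmat] at hs
  rw [show Matrix.det
        (!![x-17, -6, -14, -12; -6, x-14, -14, -6; -14, -14, x-24, -6; -12, -6, -6, x-14])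
      = x^4 - 69*x^3 + 1108*x^2 - 4704*x + 400 by
    simp [Matrix.det_succ_row_zero, Fin.sum_univ_succ, Fin.succAbove]
    ring] at hs
  exact hs

theorem rpow34_le' {x b u : ℝ} (hx : 0 ≤ x) (hb : x ≤ b) (hu : 0 ≤ u) (h : b^3 ≤ u^4) :
    x ^ ((3:ℝ)/2/2) ≤ u := by
  have key : (x ^ ((3:ℝ)/2/2)) ^ (4:ℕ) = x ^ (3:ℕ) := by
    rw [← Real.rpow_natCast (x ^ ((3:ℝ)/2/2)) 4, ← Real.rpow_mul hx,
      ← Real.rpow_natCast x 3]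
    norm_num
  have hxp : 0 ≤ x ^ ((3:ℝ)/2/2) := Real.rpow_nonneg hx _
  rw [← pow_le_pow_iff_left₀ hxp hu (by norm_num : (4:ℕ) ≠ 0), key]
  calc x ^ (3:ℕ) ≤ b ^ (3:ℕ) := pow_le_pow_left₀ hx hb 3
    _ ≤ u ^ (4:ℕ) := by exact_mod_cast h

theorem rpow34_ge' {x a l : ℝ} (ha : 0 ≤ a) (hax : a ≤ x) (hl : 0 ≤ l) (h : l^4 ≤ a^3) :
    l ≤ x ^ ((3:ℝ)/2/2) := by
  have hx : 0 ≤ x := ha.trans hax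
  have key : (x ^ ((3:ℝ)/2/2)) ^ (4:ℕ) = x ^ (3:ℕ) := by
    rw [← Real.rpow_natCast (x ^ ((3:ℝ)/2/2)) 4, ← Real.rpow_mul hx,
      ← Real.rpow_natCast x 3]
    norm_num
  have hxp : 0 ≤ x ^ ((3:ℝ)/2/2) := Real.rpow_nonneg hx _
  rw [← pow_le_pow_iff_left₀ hl hxp (by norm_num : (4:ℕ) ≠ 0), key]
  calc l ^ (4:ℕ) ≤ a ^ (3:ℕ) := by exact_mod_cast h
    _ ≤ x ^ (3:ℕ) := pow_le_pow_left₀ ha hax 3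

theorem evboundA' (x : ℝ) (hx : 0 ≤ x)
    (hq : x^4 - 69*x^3 + 1172*x^2 - 1504*x + 144 = 0) :
    (13/125 ≤ x ∧ x ≤ 21/200 ∧ x ^ ((3:ℝ)/2/2) ≤ 369/2000) ∨
    (641/500 ≤ x ∧ x ≤ 1283/1000 ∧ x ^ ((3:ℝ)/2/2) ≤ 1507/1250) ∨
    (25757/1000 ≤ x ∧ x ≤ 12879/500 ∧ x ^ ((3:ℝ)/2/2) ≤ 114337/10000) ∨
    (8371/200 ≤ x ∧ x ≤ 5232/125 ∧ x ^ ((3:ℝ)/2/2) ≤ 82279/5000) := by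
  have e1 : ¬ x < 13/125 := fun h => by
    nlinarith [sq_nonneg x, sq_nonneg (x-1), sq_nonneg (x*(x-1))]
  have e2 : ¬ (21/200 < x ∧ x < 641/500) := fun ⟨h1,h2⟩ => by
    nlinarith [mul_pos (sub_pos.2 h1) (sub_pos.2 h2), sq_nonneg (x - 1/2), sq_nonneg (x-20),
      sq_nonneg (x-30), sq_nonneg (x-35)]
  have e3 : ¬ (1283/1000 < x ∧ x < 25757/1000) := fun ⟨h1,h2⟩ => by
    nlinarith [mul_pos (sub_pos.2 h1) (sub_pos.2 h2), sq_nonneg (x - 10), sq_nonneg (x-13),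
      sq_nonneg (x-16)]
  have e4 : ¬ (12879/500 < x ∧ x < 8371/200) := fun ⟨h1,h2⟩ => by
    nlinarith [mul_pos (sub_pos.2 h1) (sub_pos.2 h2), sq_nonneg (x - 33), sq_nonneg (x-1),
      sq_nonneg (x-0.5)]
  have e5 : ¬ 5232/125 < x := fun h => by
    have h' : (0:ℝ) < x - 5232/125 := by linarith
    nlinarith [mul_pos h' h', mul_pos (mul_pos h' h') h',
      mul_pos (mul_pos (mul_pos h' h') h') h', sq_nonneg x]
  rcases le_or_gt x (21/200) with h1 | h1
  · exact Or.inl ⟨not_lt.1 e1, h1, rpow34_le' hx h1 (by norm_num) (by norm_num)⟩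
  rcases le_or_gt x (1283/1000) with h2 | h2
  · exact Or.inr (Or.inl ⟨not_lt.1 fun hc => e2 ⟨h1, hc⟩, h2,
      rpow34_le' hx h2 (by norm_num) (by norm_num)⟩)
  rcases le_or_gt x (12879/500) with h3 | h3
  · exact Or.inr (Or.inr (Or.inl ⟨not_lt.1 fun hc => e3 ⟨h2, hc⟩, h3,
      rpow34_le' hx h3 (by norm_num) (by norm_num)⟩))
  · exact Or.inr (Or.inr (Or.inr ⟨not_lt.1 fun hc => e4 ⟨h3, hc⟩, not_lt.1 e5,
      rpow34_le' hx (not_lt.1 e5) (by norm_num) (by norm_num)⟩))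

theorem evboundB' (x : ℝ) (hx : 0 ≤ x)
    (hq : x^4 - 69*x^3 + 1108*x^2 - 4704*x + 400 = 0) :
    (43/500 ≤ x ∧ x ≤ 87/1000 ∧ 397/2500 ≤ x ^ ((3:ℝ)/2/2)) ∨
    (1689/250 ≤ x ∧ x ≤ 6757/1000 ∧ 8381/2000 ≤ x ^ ((3:ℝ)/2/2)) ∨
    (14231/1000 ≤ x ∧ x ≤ 1779/125 ∧ 7327/1000 ≤ x ^ ((3:ℝ)/2/2)) ∨
    (11981/250 ≤ x ∧ x ≤ 1917/40 ∧ 182143/10000 ≤ x ^ ((3:ℝ)/2/2)) := by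
  have e1 : ¬ x < 43/500 := fun h => by
    nlinarith [sq_nonneg x, sq_nonneg (x-1), sq_nonneg (x*(x-1))]
  have e2 : ¬ (87/1000 < x ∧ x < 1689/250) := fun ⟨h1,h2⟩ => by
    nlinarith [mul_pos (sub_pos.2 h1) (sub_pos.2 h2), sq_nonneg (x-3), sq_nonneg (x-30),
      sq_nonneg (x-40), sq_nonneg (x-50)]
  have e3 : ¬ (6757/1000 < x ∧ x < 14231/1000) := fun ⟨h1,h2⟩ => by
    nlinarith [mul_pos (sub_pos.2 h1) (sub_pos.2 h2), sq_nonneg (x-10), sq_nonneg (x-11),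
      sq_nonneg (x-9)]
  have e4 : ¬ (1779/125 < x ∧ x < 11981/250) := fun ⟨h1,h2⟩ => by
    have hu : (0:ℝ) < x - 1779/125 := by linarith
    have hv : (0:ℝ) < 11981/250 - x := by linarith
    have hw : (0:ℝ) < x*x - 7*x + 1/2 := by nlinarith
    nlinarith [mul_pos (mul_pos hu hv) hw, mul_pos hu hv, sq_nonneg (x-31)]
  have e5 : ¬ 1917/40 < x := fun h => by
    have h' : (0:ℝ) < x - 1917/40 := by linarith
    nlinarith [mul_pos h' h', mul_pos (mul_pos h' h') h',
      mul_pos (mul_pos (mul_pos h' h') h') h', sq_nonneg x]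
  rcases le_or_gt x (87/1000) with h1 | h1
  · exact Or.inl ⟨not_lt.1 e1, h1, rpow34_ge' (by norm_num) (not_lt.1 e1) (by norm_num)
      (by norm_num)⟩
  rcases le_or_gt x (6757/1000) with h2 | h2
  · have ha : 1689/250 ≤ x := not_lt.1 fun hc => e2 ⟨h1, hc⟩
    exact Or.inr (Or.inl ⟨ha, h2, rpow34_ge' (by norm_num) ha (by norm_num) (by norm_num)⟩)
  rcases le_or_gt x (1779/125) with h3 | h3
  · have ha : 14231/1000 ≤ x := not_lt.1 fun hc => e3 ⟨h2, hc⟩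
    exact Or.inr (Or.inr (Or.inl ⟨ha, h3,
      rpow34_ge' (by norm_num) ha (by norm_num) (by norm_num)⟩))
  · have ha : 11981/250 ≤ x := not_lt.1 fun hc => e4 ⟨h3, hc⟩
    exact Or.inr (Or.inr (Or.inr ⟨ha, not_lt.1 e5,
      rpow34_ge' (by norm_num) ha (by norm_num) (by norm_num)⟩))

set_option maxHeartbeats 4000000 in
theorem caseA' (x0 y0 x1 y1 x2 y2 x3 y3 : ℝ)
    (h0 : (13/125 ≤ x0 ∧ x0 ≤ 21/200 ∧ y0 ≤ 369/2000) ∨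
      (641/500 ≤ x0 ∧ x0 ≤ 1283/1000 ∧ y0 ≤ 1507/1250) ∨
      (25757/1000 ≤ x0 ∧ x0 ≤ 12879/500 ∧ y0 ≤ 114337/10000) ∨
      (8371/200 ≤ x0 ∧ x0 ≤ 5232/125 ∧ y0 ≤ 82279/5000))
    (h1 : (13/125 ≤ x1 ∧ x1 ≤ 21/200 ∧ y1 ≤ 369/2000) ∨
      (641/500 ≤ x1 ∧ x1 ≤ 1283/1000 ∧ y1 ≤ 1507/1250) ∨
      (25757/1000 ≤ x1 ∧ x1 ≤ 12879/500 ∧ y1 ≤ 114337/10000) ∨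
      (8371/200 ≤ x1 ∧ x1 ≤ 5232/125 ∧ y1 ≤ 82279/5000))
    (h2 : (13/125 ≤ x2 ∧ x2 ≤ 21/200 ∧ y2 ≤ 369/2000) ∨
      (641/500 ≤ x2 ∧ x2 ≤ 1283/1000 ∧ y2 ≤ 1507/1250) ∨
      (25757/1000 ≤ x2 ∧ x2 ≤ 12879/500 ∧ y2 ≤ 114337/10000) ∨
      (8371/200 ≤ x2 ∧ x2 ≤ 5232/125 ∧ y2 ≤ 82279/5000))
    (h3 : (13/125 ≤ x3 ∧ x3 ≤ 21/200 ∧ y3 ≤ 369/2000) ∨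
      (641/500 ≤ x3 ∧ x3 ≤ 1283/1000 ∧ y3 ≤ 1507/1250) ∨
      (25757/1000 ≤ x3 ∧ x3 ≤ 12879/500 ∧ y3 ≤ 114337/10000) ∨
      (8371/200 ≤ x3 ∧ x3 ≤ 5232/125 ∧ y3 ≤ 82279/5000))
    (hs : x0 + x1 + x2 + x3 = 69) :
    y0 + y1 + y2 + y3 ≤ 293/10 := by
  rcases h0 with ⟨p0,q0,r0⟩|⟨p0,q0,r0⟩|⟨p0,q0,r0⟩|⟨p0,q0,r0⟩ <;>
  rcases h1 with ⟨p1,q1,r1⟩|⟨p1,q1,r1⟩|⟨p1,q1,r1⟩|⟨p1,q1,r1⟩ <;>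
  rcases h2 with ⟨p2,q2,r2⟩|⟨p2,q2,r2⟩|⟨p2,q2,r2⟩|⟨p2,q2,r2⟩ <;>
  rcases h3 with ⟨p3,q3,r3⟩|⟨p3,q3,r3⟩|⟨p3,q3,r3⟩|⟨p3,q3,r3⟩ <;>
  linarith only [r0, r1, r2, r3, p0, q0, p1, q1, p2, q2, p3, q3, hs]

set_option maxHeartbeats 4000000 in
theorem caseB' (x0 y0 x1 y1 x2 y2 x3 y3 : ℝ)
    (h0 : (43/500 ≤ x0 ∧ x0 ≤ 87/1000 ∧ 397/2500 ≤ y0) ∨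
      (1689/250 ≤ x0 ∧ x0 ≤ 6757/1000 ∧ 8381/2000 ≤ y0) ∨
      (14231/1000 ≤ x0 ∧ x0 ≤ 1779/125 ∧ 7327/1000 ≤ y0) ∨
      (11981/250 ≤ x0 ∧ x0 ≤ 1917/40 ∧ 182143/10000 ≤ y0))
    (h1 : (43/500 ≤ x1 ∧ x1 ≤ 87/1000 ∧ 397/2500 ≤ y1) ∨
      (1689/250 ≤ x1 ∧ x1 ≤ 6757/1000 ∧ 8381/2000 ≤ y1) ∨
      (14231/1000 ≤ x1 ∧ x1 ≤ 1779/125 ∧ 7327/1000 ≤ y1) ∨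
      (11981/250 ≤ x1 ∧ x1 ≤ 1917/40 ∧ 182143/10000 ≤ y1))
    (h2 : (43/500 ≤ x2 ∧ x2 ≤ 87/1000 ∧ 397/2500 ≤ y2) ∨
      (1689/250 ≤ x2 ∧ x2 ≤ 6757/1000 ∧ 8381/2000 ≤ y2) ∨
      (14231/1000 ≤ x2 ∧ x2 ≤ 1779/125 ∧ 7327/1000 ≤ y2) ∨
      (11981/250 ≤ x2 ∧ x2 ≤ 1917/40 ∧ 182143/10000 ≤ y2))
    (h3 : (43/500 ≤ x3 ∧ x3 ≤ 87/1000 ∧ 397/2500 ≤ y3) ∨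
      (1689/250 ≤ x3 ∧ x3 ≤ 6757/1000 ∧ 8381/2000 ≤ y3) ∨
      (14231/1000 ≤ x3 ∧ x3 ≤ 1779/125 ∧ 7327/1000 ≤ y3) ∨
      (11981/250 ≤ x3 ∧ x3 ≤ 1917/40 ∧ 182143/10000 ≤ y3))
    (hs : x0 + x1 + x2 + x3 = 69) :
    298/10 ≤ y0 + y1 + y2 + y3 := by
  rcases h0 with ⟨p0,q0,r0⟩|⟨p0,q0,r0⟩|⟨p0,q0,r0⟩|⟨p0,q0,r0⟩ <;>
  rcases h1 with ⟨p1,q1,r1⟩|⟨p1,q1,r1⟩|⟨p1,q1,r1⟩|⟨p1,q1,r1⟩ <;>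
  rcases h2 with ⟨p2,q2,r2⟩|⟨p2,q2,r2⟩|⟨p2,q2,r2⟩|⟨p2,q2,r2⟩ <;>
  rcases h3 with ⟨p3,q3,r3⟩|⟨p3,q3,r3⟩|⟨p3,q3,r3⟩|⟨p3,q3,r3⟩ <;>
  linarith only [r0, r1, r2, r3, p0, q0, p1, q1, p2, q2, p3, q3, hs]

set_option maxHeartbeats 1000000 in
/-- the matrix `A = [[3,0,−2,−2],[0,3,2,−1],[−2,2,4,0],[−2,−1,0,3]]` is PSD and
satisfies `‖A‖_{3/2} < ‖[|A_{ij}|]‖_{3/2}`, a counterexample to the norm compression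
inequality for 4×4 matrices of scalars. -/
theorem stmt16 :
    (!![(3 : ℝ), 0, -2, -2; 0, 3, 2, -1; -2, 2, 4, 0; -2, -1, 0, 3] :
        Matrix (Fin 4) (Fin 4) ℝ).PosSemidef ∧
      schattenR (3 / 2)
          (!![(3 : ℝ), 0, -2, -2; 0, 3, 2, -1; -2, 2, 4, 0; -2, -1, 0, 3] :
            Matrix (Fin 4) (Fin 4) ℝ) <
        schattenR (3 / 2)
          (Matrix.of fun i j =>
            |(!![(3 : ℝ), 0, -2, -2; 0, 3, 2, -1; -2, 2, 4, 0; -2, -1, 0, 3] :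
                Matrix (Fin 4) (Fin 4) ℝ) i j|) := by
  constructor
  · rw [Matrix.posSemidef_iff_dotProduct_mulVec]
    constructor
    · ext i j
      fin_cases i <;> fin_cases j <;>
        simp [Matrix.conjTranspose_apply, Matrix.vecHead, Matrix.vecTail]
    · intro v
      have hQ : dotProduct (star v)
          ((!![(3 : ℝ), 0, -2, -2; 0, 3, 2, -1; -2, 2, 4, 0; -2, -1, 0, 3]) *ᵥ v)
          = 3*(v 0)^2 + 3*(v 1)^2 + 4*(v 2)^2 + 3*(v 3)^2
            - 4*(v 0)*(v 2) - 4*(v 0)*(v 3) + 4*(v 1)*(v 2) - 2*(v 1)*(v 3) := by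
        simp [dotProduct, Matrix.mulVec, Fin.sum_univ_four, Matrix.vecHead,
          Matrix.vecTail]
        ring
      rw [hQ]
      nlinarith [sq_nonneg (v 0 - v 2), sq_nonneg (v 0 - v 3), sq_nonneg (v 1 + v 2),
        sq_nonneg (v 1 - v 3), sq_nonneg (v 2 + v 3), sq_nonneg (v 0 - v 2 - v 3),
        sq_nonneg (v 1 + v 2 - v 3), sq_nonneg (v 2), sq_nonneg (v 3), sq_nonneg (v 0),
        sq_nonneg (v 1), sq_nonneg (v 2 - v 3)]
  · have hBe : (Matrix.of fun i j =>
          |(!![(3 : ℝ), 0, -2, -2; 0, 3, 2, -1; -2, 2, 4, 0; -2, -1, 0, 3] :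
              Matrix (Fin 4) (Fin 4) ℝ) i j|)
        = !![(3 : ℝ), 0, 2, 2; 0, 3, 2, 1; 2, 2, 4, 0; 2, 1, 0, 3] := by
      ext i j
      fin_cases i <;> fin_cases j <;> norm_num
    rw [hBe]
    set A : Matrix (Fin 4) (Fin 4) ℝ :=
      !![(3 : ℝ), 0, -2, -2; 0, 3, 2, -1; -2, 2, 4, 0; -2, -1, 0, 3] with hA
    set B : Matrix (Fin 4) (Fin 4) ℝ :=
      !![(3 : ℝ), 0, 2, 2; 0, 3, 2, 1; 2, 2, 4, 0; 2, 1, 0, 3] with hB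
    have hMAe : Aᴴ * A
        = !![(17:ℝ), -2, -14, -12; -2, 14, 14, -6; -14, 14, 24, 2; -12, -6, 2, 14] := by
      ext i j
      fin_cases i <;> fin_cases j <;>
        simp [hA, Matrix.mul_apply, Fin.sum_univ_four, Matrix.conjTranspose_apply,
          Matrix.vecHead, Matrix.vecTail] <;> norm_num
    have hMBe : Bᴴ * B
        = !![(17:ℝ), 6, 14, 12; 6, 14, 14, 6; 14, 14, 24, 6; 12, 6, 6, 14] := by
      ext i j
      fin_cases i <;> fin_cases j <;>
        simp [hB, Matrix.mul_apply, Fin.sum_univ_four, Matrix.conjTranspose_apply,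
          Matrix.vecHead, Matrix.vecTail] <;> norm_num
    unfold schattenR
    set evA := (Matrix.isHermitian_conjTranspose_mul_self A).eigenvalues with hevA
    set evB := (Matrix.isHermitian_conjTranspose_mul_self B).eigenvalues with hevB
    have hnnA : ∀ i, 0 ≤ evA i := fun i =>
      Matrix.eigenvalues_conjTranspose_mul_self_nonneg A i
    have hnnB : ∀ i, 0 ≤ evB i := fun i =>
      Matrix.eigenvalues_conjTranspose_mul_self_nonneg B i
    have hbA := fun i => evboundA' (evA i) (hnnA i)
      (rootA' _ (Matrix.isHermitian_conjTranspose_mul_self A) hMAe i)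
    have hbB := fun i => evboundB' (evB i) (hnnB i)
      (rootB' _ (Matrix.isHermitian_conjTranspose_mul_self B) hMBe i)
    have hsumA : evA 0 + evA 1 + evA 2 + evA 3 = 69 := by
      have h := trace_eq_sum_eig' (Matrix.isHermitian_conjTranspose_mul_self A)
      rw [Fin.sum_univ_four] at h
      have ht : (Aᴴ * A).trace = 69 := by
        rw [hMAe, Matrix.trace]
        simp [Fin.sum_univ_four, Matrix.diag]
        norm_num
      rw [ht] at h
      linarith [h]
    have hsumB : evB 0 + evB 1 + evB 2 + evB 3 = 69 := by
      have h := trace_eq_sum_eig' (Matrix.isHermitian_conjTranspose_mul_self B)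
      rw [Fin.sum_univ_four] at h
      have ht : (Bᴴ * B).trace = 69 := by
        rw [hMBe, Matrix.trace]
        simp [Fin.sum_univ_four, Matrix.diag]
        norm_num
      rw [ht] at h
      linarith [h]
    have hA_le : evA 0 ^ ((3:ℝ)/2/2) + evA 1 ^ ((3:ℝ)/2/2) + evA 2 ^ ((3:ℝ)/2/2)
        + evA 3 ^ ((3:ℝ)/2/2) ≤ 293/10 :=
      caseA' (evA 0) _ (evA 1) _ (evA 2) _ (evA 3) _
        (hbA 0) (hbA 1) (hbA 2) (hbA 3) hsumA
    have hB_ge : (298:ℝ)/10 ≤ evB 0 ^ ((3:ℝ)/2/2) + evB 1 ^ ((3:ℝ)/2/2)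
        + evB 2 ^ ((3:ℝ)/2/2) + evB 3 ^ ((3:ℝ)/2/2) :=
      caseB' (evB 0) _ (evB 1) _ (evB 2) _ (evB 3) _
        (hbB 0) (hbB 1) (hbB 2) (hbB 3) hsumB
    have hnsA : 0 ≤ ∑ i, evA i ^ ((3:ℝ)/2/2) :=
      Finset.sum_nonneg fun i _ => Real.rpow_nonneg (hnnA i) _
    apply Real.rpow_lt_rpow hnsA ?_ (by norm_num)
    rw [Fin.sum_univ_four, Fin.sum_univ_four]
    linarith
end
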